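/- arXiv:2409.07682 — 8 statements merged into one kernel-verified Lean document; each statement's English description precedes it below -/
import Mathlib

section
/- For each positive integer n, the set 𝕊𝕃^n of vectors x ∈ ℂ^n whose entries form the spectrum (with multiplicity) of some n-by-n row stochastic matrix is star-shaped at the all-ones vector e: if x ∈ 𝕊𝕃^n and α ∈ [0,1], then αx + (1−α)e ∈ 𝕊𝕃^n. -/
open Finset Polynomial

/-- A real square matrix is (row) stochastic if it is entrywise nonnegative and
each row sums to 1. -/
def IsStochastic {n : ℕ} (A : Matrix (Fin n) (Fin n) ℝ) : Prop :=
  (∀ i j, 0 ≤ A i j) ∧ ∀ i, ∑ j, A i j = 1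

/-- `SL n` is the set of vectors in `ℂ^n` whose entries form the spectrum, counted
with algebraic multiplicity, of some `n`-by-`n` row stochastic matrix. -/
def SL (n : ℕ) : Set (Fin n → ℂ) :=
  {x | ∃ A : Matrix (Fin n) (Fin n) ℝ, IsStochastic A ∧
        (A.map (Complex.ofReal)).charpoly = ∏ i, (X - C (x i))}

open Matrix in
theorem SL_aux {n : ℕ} (M : Matrix (Fin n) (Fin n) ℂ) (x : Fin n → ℂ) (a b : ℂ) (ha : a ≠ 0)
    (h : M.charpoly = ∏ i, (X - C (x i))) :
    (a • M + b • 1).charpoly = ∏ i, (X - C (a * x i + b)) := by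
  set p : ℂ[X] := C a⁻¹ * (X - C b) with hp
  have factor : ∀ c : ℂ, C a * (p - C c) = X - C (a * c + b) := by
    intro c
    rw [hp, mul_sub, ← mul_assoc, ← C_mul, mul_inv_cancel₀ ha, C_1, one_mul, ← C_mul, C_add]
    ring
  have hmat : (C a) • ((charmatrix M).map (aeval p)) = charmatrix (a • M + b • 1) := by
    ext i j : 2
    rcases eq_or_ne i j with rfl | hij
    · simp only [Matrix.smul_apply, Matrix.map_apply, charmatrix_apply_eq, Matrix.add_apply,
        Matrix.one_apply_eq, smul_eq_mul, map_sub, aeval_X_left, aeval_C,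
        Polynomial.algebraMap_eq, aeval_X_left_apply]
      rw [show (aeval p) X = p from aeval_X p, factor]
      ring_nf
    · simp only [Matrix.smul_apply, Matrix.map_apply, charmatrix_apply_ne _ _ _ hij,
        Matrix.add_apply, Matrix.smul_apply, Matrix.one_apply_ne hij, smul_eq_mul, map_neg,
        aeval_C, Polynomial.algebraMap_eq, mul_neg, ← C_mul, mul_zero, add_zero]
  have hdet : (aeval p) M.charmatrix.det = (M.charmatrix.map (aeval p)).det := by
    simpa using RingHom.map_det ((aeval p : ℂ[X] →ₐ[ℂ] ℂ[X]) : ℂ[X] →+* ℂ[X]) M.charmatrix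
  have key : (C a)^n * (aeval p) M.charpoly = (a • M + b • 1).charpoly := by
    rw [Matrix.charpoly, hdet, Matrix.charpoly, ← hmat, Matrix.det_smul]
    simp
  rw [← key, h, map_prod]
  rw [show ((C a)^n : ℂ[X]) = ∏ _i : Fin n, C a by simp, ← Finset.prod_mul_distrib]
  refine Finset.prod_congr rfl fun i _ => ?_
  simp only [map_sub, aeval_C, Polynomial.algebraMap_eq]
  rw [show (aeval p) X = p from aeval_X p, factor]

/-- `SL n` is star-shaped at the all-ones vector. -/
theorem SL_starShaped (n : ℕ) (hn : 0 < n) (x : Fin n → ℂ) (hx : x ∈ SL n)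
    (α : ℝ) (hα₀ : 0 ≤ α) (hα₁ : α ≤ 1) :
    (fun i => (α : ℂ) * x i + (1 - (α : ℂ))) ∈ SL n := by
  obtain ⟨A, ⟨hA₀, hA₁⟩, hA⟩ := hx
  refine ⟨α • A + (1 - α) • 1, ⟨?_, ?_⟩, ?_⟩
  · intro i j
    have h1 : (0:ℝ) ≤ (1 : Matrix (Fin n) (Fin n) ℝ) i j := by
      rcases eq_or_ne i j with rfl | hij
      · simp
      · simp [Matrix.one_apply_ne hij]
    have := hA₀ i j
    simp only [Matrix.add_apply, Matrix.smul_apply, smul_eq_mul]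
    have h2 : 0 ≤ (1 - α) * (1 : Matrix (Fin n) (Fin n) ℝ) i j :=
      mul_nonneg (by linarith) h1
    have h3 : 0 ≤ α * A i j := mul_nonneg hα₀ this
    linarith
  · intro i
    have hone : ∑ j, (1 : Matrix (Fin n) (Fin n) ℝ) i j = 1 := by
      simp [Matrix.one_apply]
    simp only [Matrix.add_apply, Matrix.smul_apply, smul_eq_mul, Finset.sum_add_distrib,
      ← Finset.mul_sum, hA₁ i, hone]
    ring
  · have hmap : ((α • A + (1 - α) • 1 : Matrix (Fin n) (Fin n) ℝ).map Complex.ofReal)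
        = (α : ℂ) • (A.map Complex.ofReal) + ((1 : ℂ) - (α : ℂ)) • 1 := by
      ext i j
      rcases eq_or_ne i j with rfl | hij
      · simp [Matrix.map_apply, Matrix.one_apply_eq]
      · simp [Matrix.map_apply, Matrix.one_apply_ne hij]
    rw [hmap]
    rcases eq_or_ne α 0 with rfl | hα
    · have h1 : ((0 : ℂ) • (A.map Complex.ofReal) + ((1:ℂ) - (0:ℂ)) • 1)
          = (1 : Matrix (Fin n) (Fin n) ℂ) := by
        simp
      norm_num
      have htri : (1 : Matrix (Fin n) (Fin n) ℂ).BlockTriangular id :=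
        Matrix.blockTriangular_one
      rw [Matrix.charpoly_of_upperTriangular _ htri]
      simp [Finset.prod_const]
    · have := SL_aux (A.map Complex.ofReal) x (α : ℂ) (1 - (α : ℂ))
        (by exact_mod_cast hα) hA
      rw [this]
end

section
/- If x = (1, x_2, ..., x_n) ∈ 𝕊𝕃^n, i.e. {1, x_2, ..., x_n} is the spectrum of an n-by-n stochastic matrix, then for every α ∈ [0,1] the list {1, αx_2, ..., αx_n} is the spectrum of some n-by-n stochastic matrix. -/
open Finset Polynomial

section Aux

open Matrix

variable {k : ℕ}

lemma eval_charpoly' (M : Matrix (Fin k) (Fin k) ℂ) (z : ℂ) :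
    M.charpoly.eval z = (z • (1 : Matrix (Fin k) (Fin k) ℂ) - M).det := by
  rw [Matrix.charpoly, ← Polynomial.coe_evalRingHom, RingHom.map_det]
  congr 1
  ext i j
  by_cases h : i = j <;>
    simp [h, Matrix.charmatrix_apply, Matrix.map_apply, Matrix.one_apply,
      Matrix.diagonal_apply]

lemma det_col_block (Z : Matrix (Fin (k+1)) (Fin (k+1)) ℂ) (w : ℂ)
    (h : ∀ i, Z i 0 = if i = 0 then w else 0) :
    Z.det = w * (Z.submatrix Fin.succ Fin.succ).det := by
  rw [Matrix.det_succ_column_zero]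
  rw [Finset.sum_eq_single 0]
  · simp [h, Fin.succAbove_zero]
  · intro i _ hi
    simp [h, hi]
  · simp

/-- strictly lower first-column matrix -/
def Emat (k : ℕ) : Matrix (Fin (k+1)) (Fin (k+1)) ℂ :=
  Matrix.of fun i j => if j = 0 ∧ i ≠ 0 then 1 else 0

def Pmat (k : ℕ) : Matrix (Fin (k+1)) (Fin (k+1)) ℂ := 1 + Emat k
def Qmat (k : ℕ) : Matrix (Fin (k+1)) (Fin (k+1)) ℂ := 1 - Emat k

def Jmat (k : ℕ) : Matrix (Fin (k+1)) (Fin (k+1)) ℂ := Matrix.of fun _ _ => 1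

lemma Emat_mul_Emat : Emat k * Emat k = 0 := by
  ext i j
  rw [Matrix.mul_apply]
  apply Finset.sum_eq_zero
  intro l _
  by_cases hl : l = 0
  · subst hl; simp [Emat]
  · simp [Emat, hl]

lemma Qmat_mul_Pmat : Qmat k * Pmat k = 1 := by
  simp [Qmat, Pmat, mul_add, sub_mul, Emat_mul_Emat]

lemma Pmat_apply_zero (i : Fin (k+1)) : Pmat k i 0 = 1 := by
  by_cases h : i = 0 <;> simp [Pmat, Emat, Matrix.one_apply, h]

lemma Qmat_rowsum (i : Fin (k+1)) : ∑ j, Qmat k i j = if i = 0 then 1 else 0 := by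
  by_cases h : i = 0
  · subst h
    simp [Qmat, Emat, Matrix.one_apply]
  · have h1 : ∑ j, (1 : Matrix (Fin (k+1)) (Fin (k+1)) ℂ) i j = 1 := by
      simp [Matrix.one_apply]
    have h2 : ∑ j, Emat k i j = 1 := by
      simp only [Emat, Matrix.of_apply]
      rw [Finset.sum_eq_single 0] <;> simp [h]
    simp only [Qmat, Matrix.sub_apply, Finset.sum_sub_distrib, h1, h2, h, if_false, sub_self]

lemma det_conj_QP (M : Matrix (Fin (k+1)) (Fin (k+1)) ℂ) (z : ℂ) :
    (z • (1 : Matrix (Fin (k+1)) (Fin (k+1)) ℂ) - M).det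
      = (z • 1 - Qmat k * M * Pmat k).det := by
  have hcross : Qmat k * (z • (1 : Matrix (Fin (k+1)) (Fin (k+1)) ℂ) - M) * Pmat k
      = z • 1 - Qmat k * M * Pmat k := by
    rw [Matrix.mul_sub, Matrix.sub_mul, Matrix.mul_smul, mul_one, Matrix.smul_mul,
      Qmat_mul_Pmat]
  have hdet : (Qmat k).det * (Pmat k).det = 1 := by
    have := congrArg Matrix.det (Qmat_mul_Pmat (k := k))
    rwa [Matrix.det_mul, Matrix.det_one] at this
  rw [← hcross, Matrix.det_mul, Matrix.det_mul]
  set d := (z • (1 : Matrix (Fin (k+1)) (Fin (k+1)) ℂ) - M).det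
  linear_combination (-d) * hdet

lemma QMP_col (M : Matrix (Fin (k+1)) (Fin (k+1)) ℂ) (hM : ∀ i, ∑ j, M i j = 1)
    (i : Fin (k+1)) : (Qmat k * M * Pmat k) i 0 = if i = 0 then 1 else 0 := by
  rw [Matrix.mul_apply]
  simp only [Pmat_apply_zero, mul_one]
  have : ∑ l, (Qmat k * M) i l = ∑ t, Qmat k i t := by
    simp only [Matrix.mul_apply]
    rw [Finset.sum_comm]
    refine Finset.sum_congr rfl fun t _ => ?_
    rw [← Finset.mul_sum, hM t, mul_one]
  rw [this, Qmat_rowsum]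

lemma QJP_row (i : Fin (k+1)) (hi : i ≠ 0) (j : Fin (k+1)) :
    (Qmat k * Jmat k * Pmat k) i j = 0 := by
  have h1 : ∀ l, (Qmat k * Jmat k) i l = 0 := by
    intro l
    rw [Matrix.mul_apply]
    simp only [Jmat, Matrix.of_apply, mul_one]
    rw [Qmat_rowsum, if_neg hi]
  rw [Matrix.mul_apply]
  simp [h1]

lemma submatrix_smul_one_sub (M : Matrix (Fin (k+1)) (Fin (k+1)) ℂ) (z : ℂ) :
    (z • (1 : Matrix (Fin (k+1)) (Fin (k+1)) ℂ) - M).submatrix Fin.succ Fin.succ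
      = z • 1 - M.submatrix Fin.succ Fin.succ := by
  ext i j
  simp [Matrix.one_apply, Fin.succ_inj]

/-- Main determinant step: for a matrix with unit row sums,
`det (z•1 - M) = (z-1) * det (z•1 - (QMP).submatrix succ succ)`. -/
lemma det_step (M : Matrix (Fin (k+1)) (Fin (k+1)) ℂ) (hM : ∀ i, ∑ j, M i j = 1)
    (z : ℂ) :
    (z • (1 : Matrix (Fin (k+1)) (Fin (k+1)) ℂ) - M).det
      = (z - 1) * (z • 1 - (Qmat k * M * Pmat k).submatrix Fin.succ Fin.succ).det := by
  rw [det_conj_QP M z, det_col_block _ (z - 1), submatrix_smul_one_sub]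
  intro i
  rw [Matrix.sub_apply, Matrix.smul_apply, Matrix.one_apply, QMP_col M hM]
  by_cases h : i = 0 <;> simp [h]

end Aux

/-- If `{1, x_2, ..., x_n}` is the spectrum of an `n`-by-`n` stochastic matrix, then for
every `α ∈ [0,1]` the list `{1, αx_2, ..., αx_n}` is the spectrum of some `n`-by-`n`
stochastic matrix. -/
theorem scaled_spectrum_stochastic {n : ℕ} (x : Fin n → ℂ)
    (A : Matrix (Fin (n + 1)) (Fin (n + 1)) ℝ) (hA : IsStochastic A)
    (hspec : (A.map (Complex.ofReal)).charpoly = (X - C 1) * ∏ i, (X - C (x i)))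
    (α : ℝ) (hα₀ : 0 ≤ α) (hα₁ : α ≤ 1) :
    ∃ B : Matrix (Fin (n + 1)) (Fin (n + 1)) ℝ, IsStochastic B ∧
      (B.map (Complex.ofReal)).charpoly = (X - C 1) * ∏ i, (X - C ((α : ℂ) * x i)) := by
  classical
  set c : ℝ := (1 - α) / (n + 1) with hc
  have hn1 : ((n : ℝ) + 1) ≠ 0 := by positivity
  have hc0 : 0 ≤ c := by
    apply div_nonneg (by linarith)
    positivity
  set B : Matrix (Fin (n + 1)) (Fin (n + 1)) ℝ := Matrix.of fun i j => α * A i j + c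
    with hB
  have hBrow : ∀ i, ∑ j, B i j = 1 := by
    intro i
    simp only [hB, Matrix.of_apply]
    rw [Finset.sum_add_distrib, ← Finset.mul_sum, hA.2 i, mul_one, Finset.sum_const,
      Finset.card_univ, Fintype.card_fin, nsmul_eq_mul]
    push_cast
    rw [hc, mul_div_cancel₀ _ hn1]
    ring
  refine ⟨B, ⟨fun i j => add_nonneg (mul_nonneg hα₀ (hA.1 i j)) hc0, hBrow⟩, ?_⟩
  -- complex versions
  set A₁ : Matrix (Fin (n + 1)) (Fin (n + 1)) ℂ := A.map Complex.ofReal with hA₁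
  set B₁ : Matrix (Fin (n + 1)) (Fin (n + 1)) ℂ := B.map Complex.ofReal with hB₁
  have hRA : ∀ i, ∑ j, A₁ i j = 1 := by
    intro i
    simp only [hA₁, Matrix.map_apply]
    rw [← Complex.ofReal_sum, hA.2 i, Complex.ofReal_one]
  have hRB : ∀ i, ∑ j, B₁ i j = 1 := by
    intro i
    simp only [hB₁, Matrix.map_apply]
    rw [← Complex.ofReal_sum, hBrow i, Complex.ofReal_one]
  set N₁ : Matrix (Fin n) (Fin n) ℂ :=
    (Qmat n * A₁ * Pmat n).submatrix Fin.succ Fin.succ with hN₁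
  -- charpoly of N₁
  have hXC : (X - C (1 : ℂ)) ≠ 0 := X_sub_C_ne_zero 1
  have hchN : N₁.charpoly = ∏ i, (X - C (x i)) := by
    apply mul_left_cancel₀ hXC
    rw [← hspec]
    apply Polynomial.funext
    intro z
    rw [eval_charpoly', det_step A₁ hRA z]
    simp [eval_charpoly', hN₁]
  -- B₁ decomposition
  have hB₁eq : B₁ = (α : ℂ) • A₁ + (c : ℂ) • Jmat n := by
    ext i j
    simp only [hB₁, hB, Matrix.map_apply, Matrix.of_apply, Matrix.add_apply,
      Matrix.smul_apply, hA₁, Jmat, smul_eq_mul, mul_one]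
    push_cast
    ring
  have hsub : (Qmat n * B₁ * Pmat n).submatrix Fin.succ Fin.succ = (α : ℂ) • N₁ := by
    rw [hB₁eq]
    have : Qmat n * ((α : ℂ) • A₁ + (c : ℂ) • Jmat n) * Pmat n
        = (α : ℂ) • (Qmat n * A₁ * Pmat n) + (c : ℂ) • (Qmat n * Jmat n * Pmat n) := by
      rw [Matrix.mul_add, Matrix.add_mul, Matrix.mul_smul, Matrix.smul_mul,
        Matrix.mul_smul, Matrix.smul_mul]
    rw [this]
    ext i j
    simp only [Matrix.submatrix_apply, Matrix.add_apply, Matrix.smul_apply,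
      QJP_row (Fin.succ i) (Fin.succ_ne_zero i) (Fin.succ j), smul_eq_mul, mul_zero,
      add_zero, hN₁]
  -- scaled charpoly of N₁
  have hscaled : ∀ z : ℂ, (z • (1 : Matrix (Fin n) (Fin n) ℂ) - (α : ℂ) • N₁).det
      = ∏ i, (z - (α : ℂ) * x i) := by
    intro z
    by_cases hα : (α : ℂ) = 0
    · rw [hα]
      simp only [zero_smul, sub_zero, zero_mul]
      rw [Matrix.det_smul, Matrix.det_one, mul_one, Fintype.card_fin, Finset.prod_const]
      simp
    · have hfac : z • (1 : Matrix (Fin n) (Fin n) ℂ) - (α : ℂ) • N₁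
          = (α : ℂ) • ((z / α) • (1 : Matrix (Fin n) (Fin n) ℂ) - N₁) := by
        rw [smul_sub, smul_smul, mul_div_cancel₀ _ hα]
      rw [hfac, Matrix.det_smul, Fintype.card_fin, ← eval_charpoly', hchN]
      rw [Polynomial.eval_prod]
      simp only [eval_sub, eval_X, eval_C]
      have hpow : ((α : ℂ)) ^ n = ∏ _i : Fin n, (α : ℂ) := by simp
      rw [hpow, ← Finset.prod_mul_distrib]
      refine Finset.prod_congr rfl fun i _ => ?_
      field_simp
  -- final
  apply Polynomial.funext
  intro z
  rw [eval_charpoly', det_step B₁ hRB z, hsub, hscaled z]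
  simp [Polynomial.eval_prod]
end

section
/- (Brauer's theorem) Let A be an n-by-n complex matrix with eigenvalues λ_1, ..., λ_n (with multiplicity), let x be an eigenvector of A for λ_k, and let y ∈ ℂ^n. Then the eigenvalues of A + x y* are λ_1, ..., λ_{k−1}, λ_k + y*x, λ_{k+1}, ..., λ_n. -/
open Finset Polynomial Matrix

/-- **Matrix determinant lemma** over a commutative ring. -/
theorem det_add_vecMulVec' {R : Type*} [CommRing R] {m : Type*} [DecidableEq m] [Fintype m]
    (M : Matrix m m R) (u v : m → R) :
    (M + vecMulVec u v).det = M.det + v ⬝ᵥ (M.adjugate *ᵥ u) := by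
  classical
  set U : m → m → R := fun i => u i • v with hU
  set M' : m → m → R := Matrix.of.symm M with hM'
  set f := (detRowAlternating : (m → R) [⋀^m]→ₗ[R] R) with hf
  set t : Finset m → R := fun s => f (s.piecewise U M') with ht
  have expand : (M + vecMulVec u v).det = ∑ s : Finset m, t s := by
    have hmat : (M + vecMulVec u v) = Matrix.of (U + M') := by
      ext i j
      simp [hU, hM', vecMulVec_apply, Matrix.add_apply, add_comm]
    rw [hmat]
    exact f.toMultilinearMap.map_add_univ U M'
  have hdet : ∀ s : Finset m, t s = (Matrix.of (s.piecewise U M')).det := fun s => rfl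
  have hbig : ∀ s : Finset m, 1 < s.card → t s = 0 := by
    intro s hs
    obtain ⟨i, hi, j, hj, hij⟩ := Finset.one_lt_card.mp hs
    set N : Matrix m m R := Matrix.of (s.piecewise U M') with hN
    have hNi : N i = u i • v := by
      show s.piecewise U M' i = u i • v
      rw [Finset.piecewise_eq_of_mem _ _ _ hi]
    have hNj : N j = u j • v := by
      show s.piecewise U M' j = u j • v
      rw [Finset.piecewise_eq_of_mem _ _ _ hj]
    have h1 : N = N.updateRow i (u i • v) := by rw [← hNi, updateRow_eq_self]
    have h2 : (N.updateRow i v) = (N.updateRow i v).updateRow j (u j • v) := by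
      conv_rhs => rw [← hNj, show N j = (N.updateRow i v) j from (updateRow_ne (Ne.symm hij)).symm,
        updateRow_eq_self]
    have h3 : ((N.updateRow i v).updateRow j v).det = 0 := by
      apply det_zero_of_row_eq hij
      rw [updateRow_ne hij, updateRow_self, updateRow_self]
    calc t s = N.det := rfl
      _ = (N.updateRow i (u i • v)).det := by rw [← h1]
      _ = u i * (N.updateRow i v).det := by rw [det_updateRow_smul]
      _ = u i * ((N.updateRow i v).updateRow j (u j • v)).det := by rw [← h2]
      _ = u i * (u j * ((N.updateRow i v).updateRow j v).det) := by rw [det_updateRow_smul]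
      _ = 0 := by rw [h3, mul_zero, mul_zero]
  have hempty : t ∅ = M.det := by
    rw [hdet, Finset.piecewise_empty]; rfl
  have hsingle : ∀ i : m, t {i} = u i * cramer Mᵀ v i := by
    intro i
    rw [hdet, Finset.piecewise_singleton]
    have : Matrix.of (Function.update M' i (U i)) = M.updateRow i (u i • v) := rfl
    rw [this, det_updateRow_smul, cramer_transpose_apply]
  have hsum : ∑ s : Finset m, t s = t ∅ + ∑ i : m, t {i} := by
    have hsub : insert ∅ (univ.image fun i : m => ({i} : Finset m)) ⊆ univ := subset_univ _
    have hzero : ∀ s ∈ (univ : Finset (Finset m)),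
        s ∉ insert ∅ (univ.image fun i : m => ({i} : Finset m)) → t s = 0 := by
      intro s _ hs
      simp only [Finset.mem_insert, Finset.mem_image, not_or, not_exists] at hs
      apply hbig
      have h0 : s.card ≠ 0 := fun h => hs.1 (Finset.card_eq_zero.mp h)
      have h1 : s.card ≠ 1 := by
        intro h
        obtain ⟨a, rfl⟩ := Finset.card_eq_one.mp h
        exact hs.2 a ⟨Finset.mem_univ a, rfl⟩
      omega
    rw [← Finset.sum_subset hsub hzero,
      Finset.sum_insert (by simp),
      Finset.sum_image (fun a _ b _ h => Finset.singleton_injective h)]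
  rw [expand, hsum, hempty]
  congr 1
  have hcr : ∀ i, cramer Mᵀ v i = ((M.adjugate)ᵀ *ᵥ v) i := by
    intro i
    rw [cramer_eq_adjugate_mulVec, adjugate_transpose]
  calc ∑ i, t {i} = ∑ i, u i * ((M.adjugate)ᵀ *ᵥ v) i := by
        simp_rw [hsingle, hcr]
    _ = u ⬝ᵥ ((M.adjugate)ᵀ *ᵥ v) := rfl
    _ = v ⬝ᵥ (M.adjugate *ᵥ u) := by
        rw [mulVec_transpose, dotProduct_comm, dotProduct_mulVec]


/-- **Brauer's theorem.** If `A` has eigenvalues `λ_1, ..., λ_n` (with multiplicity),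
`x` is an eigenvector of `A` for `λ_k`, and `y ∈ ℂ^n`, then the eigenvalues of
`A + x y*` are obtained from those of `A` by replacing `λ_k` with `λ_k + y*x`. -/
theorem brauer {n : ℕ} (A : Matrix (Fin n) (Fin n) ℂ) (lam : Fin n → ℂ)
    (hA : A.charpoly = ∏ i, (X - C (lam i)))
    (k : Fin n) (x : Fin n → ℂ) (hx : x ≠ 0) (heig : A.mulVec x = lam k • x)
    (y : Fin n → ℂ) :
    (A + Matrix.vecMulVec x (star y)).charpoly =
      ∏ i, (X - C (if i = k then lam k + star y ⬝ᵥ x else lam i)) := by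
  classical
  set q : ℂ[X] := ∏ i ∈ Finset.univ.erase k, (X - C (lam i)) with hqdef
  set u : Fin n → ℂ[X] := fun i => C (x i) with hu
  set v : Fin n → ℂ[X] := fun i => C (star y i) with hv
  set M : Matrix (Fin n) (Fin n) ℂ[X] := charmatrix A with hM
  have hXk : (X - C (lam k)) ≠ (0 : ℂ[X]) := X_sub_C_ne_zero (lam k)
  have hp : A.charpoly = (X - C (lam k)) * q := by
    rw [hA, ← Finset.mul_prod_erase _ _ (Finset.mem_univ k)]
  -- charmatrix of the perturbed matrix
  have hchar : charmatrix (A + Matrix.vecMulVec x (star y))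
      = M + vecMulVec (fun i => -u i) v := by
    ext i j : 2
    simp only [charmatrix_apply, Matrix.add_apply, vecMulVec_apply, map_add, _root_.map_mul,
      hu, hv, hM]
    ring
  -- charmatrix A applied to the eigenvector
  have hMu : M *ᵥ u = (X - C (lam k)) • u := by
    funext i
    have hAx : ∑ j, A i j * x j = lam k * x i := by
      have := congrFun heig i
      simpa [Matrix.mulVec, dotProduct] using this
    simp only [Matrix.mulVec, dotProduct, hM, charmatrix_apply, hu, Pi.smul_apply,
      smul_eq_mul, sub_mul, Finset.sum_sub_distrib, diagonal_apply, ite_mul, zero_mul]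
    rw [Finset.sum_ite_eq Finset.univ i (fun j => X * C (x j)) , if_pos (Finset.mem_univ i)]
    rw [show ∑ j, C (A i j) * C (x j) = C (lam k) * C (x i) by
      rw [← _root_.map_mul, ← hAx, map_sum]; simp [_root_.map_mul]]
  -- adjugate applied to the eigenvector
  have hadj : M.adjugate *ᵥ u = q • u := by
    have h1 : M.adjugate *ᵥ (M *ᵥ u) = ((X - C (lam k)) * q) • u := by
      rw [Matrix.mulVec_mulVec, Matrix.adjugate_mul, Matrix.smul_mulVec,
        Matrix.one_mulVec, show M.det = A.charpoly from rfl, hp]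
    rw [hMu, Matrix.mulVec_smul] at h1
    funext i
    have := congrFun h1 i
    simp only [Pi.smul_apply, smul_eq_mul, mul_assoc] at this ⊢
    exact mul_left_cancel₀ hXk this
  -- the dot product
  have hdot : v ⬝ᵥ (q • u) = q * C (star y ⬝ᵥ x) := by
    simp only [dotProduct, Pi.smul_apply, smul_eq_mul, hu, hv]
    rw [map_sum, Finset.mul_sum]
    apply Finset.sum_congr rfl
    intro i _
    rw [_root_.map_mul]
    ring
  -- compute the charpoly
  have hmain : (A + Matrix.vecMulVec x (star y)).charpoly
      = (X - C (lam k)) * q - q * C (star y ⬝ᵥ x) := by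
    show (charmatrix (A + Matrix.vecMulVec x (star y))).det = _
    rw [hchar, det_add_vecMulVec']
    have : (fun i => -u i) = -u := rfl
    rw [this, Matrix.mulVec_neg, dotProduct_neg, hadj, hdot]
    rw [show M.det = A.charpoly from rfl, hp]
    ring
  rw [hmain]
  rw [← Finset.mul_prod_erase _ _ (Finset.mem_univ k), if_pos rfl]
  have hqeq : ∏ i ∈ Finset.univ.erase k, (X - C (if i = k then lam k + star y ⬝ᵥ x else lam i))
      = q := by
    apply Finset.prod_congr rfl
    intro i hi
    rw [if_neg (Finset.ne_of_mem_erase hi)]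
  rw [hqeq, map_add]
  ring
end

section
/- For an invertible complex n-by-n matrix S, the spectracone 𝒞(S) = { x ∈ ℂ^n : S·diag(x)·S^{−1} is entrywise nonnegative real } is a nonempty convex cone that is closed under the Hadamard (entrywise) product: if x, y ∈ 𝒞(S) and α, β ≥ 0 then αx + βy ∈ 𝒞(S) and x∘y ∈ 𝒞(S). -/
open Finset Matrix

/-- A complex matrix is entrywise nonnegative (real): every entry has zero imaginary
part and nonnegative real part. -/
def EntrywiseNonneg {n : ℕ} (M : Matrix (Fin n) (Fin n) ℂ) : Prop :=
  ∀ i j, (M i j).im = 0 ∧ 0 ≤ (M i j).re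

/-- The Perron spectracone of `S`. -/
def spectracone {n : ℕ} (S : Matrix (Fin n) (Fin n) ℂ) : Set (Fin n → ℂ) :=
  {x | EntrywiseNonneg (S * diagonal x * S⁻¹)}

/-- The spectracone of an invertible matrix is a nonempty convex cone closed under the
Hadamard (entrywise) product. -/
theorem spectracone_convexCone_hadamard {n : ℕ} (S : Matrix (Fin n) (Fin n) ℂ)
    (hS : IsUnit S.det) :
    (fun _ => (1 : ℂ)) ∈ spectracone S ∧
    (∀ x ∈ spectracone S, ∀ y ∈ spectracone S, ∀ α β : ℝ, 0 ≤ α → 0 ≤ β →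
      (fun i => (α : ℂ) * x i + (β : ℂ) * y i) ∈ spectracone S) ∧
    (∀ x ∈ spectracone S, ∀ y ∈ spectracone S, x * y ∈ spectracone S) := by
  have hmul : S * S⁻¹ = 1 := Matrix.mul_nonsing_inv S hS
  have hinv : S⁻¹ * S = 1 := Matrix.nonsing_inv_mul S hS
  refine ⟨?_, ?_, ?_⟩
  · -- 1 ∈ spectracone
    intro i j
    have : S * diagonal (fun _ => (1 : ℂ)) * S⁻¹ = 1 := by
      rw [show (diagonal (fun _ => (1 : ℂ))) = (1 : Matrix (Fin n) (Fin n) ℂ) from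
        Matrix.diagonal_one, Matrix.mul_one, hmul]
    rw [this]
    by_cases h : i = j <;> simp [Matrix.one_apply, h]
  · intro x hx y hy α β hα hβ i j
    have hdiag : diagonal (fun i => (α : ℂ) * x i + (β : ℂ) * y i) =
        (α : ℂ) • diagonal x + (β : ℂ) • diagonal y := by
      ext a b
      by_cases h : a = b <;> simp [Matrix.diagonal_apply, h]
    have hM : S * diagonal (fun i => (α : ℂ) * x i + (β : ℂ) * y i) * S⁻¹ =
        (α : ℂ) • (S * diagonal x * S⁻¹) + (β : ℂ) • (S * diagonal y * S⁻¹) := by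
      rw [hdiag]
      rw [Matrix.mul_add, Matrix.add_mul, Matrix.mul_smul, Matrix.smul_mul,
        Matrix.mul_smul, Matrix.smul_mul]
    have hxij := hx i j
    have hyij := hy i j
    rw [hM]
    simp only [Matrix.add_apply, Matrix.smul_apply, Complex.add_im, Complex.add_re,
      smul_eq_mul, Complex.mul_im, Complex.mul_re, Complex.ofReal_re, Complex.ofReal_im]
    constructor
    · rw [hxij.1, hyij.1]; ring
    · have := hxij.2; have := hyij.2
      nlinarith [hxij.2, hyij.2]
  · intro x hx y hy i j
    have hM : S * diagonal (x * y) * S⁻¹ =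
        (S * diagonal x * S⁻¹) * (S * diagonal y * S⁻¹) := by
      have : diagonal (x * y) = diagonal x * diagonal y := by
        rw [Matrix.diagonal_mul_diagonal]; rfl
      rw [this, ← Matrix.mul_assoc]
      rw [show (S * diagonal x * S⁻¹) * (S * diagonal y * S⁻¹)
          = S * diagonal x * (S⁻¹ * S) * diagonal y * S⁻¹ by
        simp only [Matrix.mul_assoc]]
      rw [hinv, Matrix.mul_one, Matrix.mul_assoc]
    rw [hM]
    set A := S * diagonal x * S⁻¹ with hA
    set B := S * diagonal y * S⁻¹ with hB
    rw [Matrix.mul_apply]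
    constructor
    · rw [Complex.im_sum]
      apply Finset.sum_eq_zero
      intro k _
      have h1 := hx i k
      have h2 := hy k j
      rw [← hA] at h1; rw [← hB] at h2
      simp [Complex.mul_im, h1.1, h2.1]
    · rw [Complex.re_sum]
      apply Finset.sum_nonneg
      intro k _
      have h1 := hx i k
      have h2 := hy k j
      rw [← hA] at h1; rw [← hB] at h2
      simp only [Complex.mul_re, h1.1, h2.1]
      nlinarith [h1.2, h2.2]
end

section
/- For invertible S ∈ GL_n(ℂ), the spectracone satisfies: (i) 𝒞(PS) = 𝒞(S) for any permutation matrix P; (ii) 𝒞(D_v S) = 𝒞(S) for any positive vector v; (iii) 𝒞(S D_w) = 𝒞(S) for any totally nonzero vector w; (iv) 𝒞(αS) = 𝒞(S) for any nonzero scalar α; (v) 𝒞(conj(S)) = conj(𝒞(S)); (vi) 𝒞(S^{−⊤}) = 𝒞(S). -/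
open Finset Matrix

lemma EntrywiseNonneg.submatrix_iff {n : ℕ} (M : Matrix (Fin n) (Fin n) ℂ)
    (σ : Equiv.Perm (Fin n)) :
    EntrywiseNonneg (M.submatrix σ σ) ↔ EntrywiseNonneg M := by
  constructor
  · intro h i j
    have := h (σ.symm i) (σ.symm j)
    simpa using this
  · intro h i j
    exact h _ _

lemma EntrywiseNonneg.transpose_iff {n : ℕ} (M : Matrix (Fin n) (Fin n) ℂ) :
    EntrywiseNonneg Mᵀ ↔ EntrywiseNonneg M :=
  ⟨fun h i j => h j i, fun h i j => h j i⟩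

lemma EntrywiseNonneg.map_conj_iff {n : ℕ} (M : Matrix (Fin n) (Fin n) ℂ) :
    EntrywiseNonneg (M.map (starRingEnd ℂ)) ↔ EntrywiseNonneg M := by
  constructor <;> intro h i j <;> have := h i j <;>
    simp only [Matrix.map_apply, Complex.conj_im, Complex.conj_re, neg_eq_zero] at this ⊢ <;>
    exact this

lemma permMatrix_inv {n : ℕ} (σ : Equiv.Perm (Fin n)) :
    (σ.permMatrix ℂ)⁻¹ = σ⁻¹.permMatrix ℂ := by
  apply inv_eq_right_inv
  rw [show σ.permMatrix ℂ = σ.toPEquiv.toMatrix from rfl,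
    PEquiv.toMatrix_toPEquiv_mul]
  ext i j
  simp [Equiv.Perm.permMatrix, PEquiv.toMatrix_apply, Equiv.toPEquiv_apply,
    Matrix.one_apply, eq_comm, Equiv.symm_apply_eq]

/-- Behavior of the spectracone under basic transformations of `S`. -/
theorem spectracone_transforms {n : ℕ} (S : Matrix (Fin n) (Fin n) ℂ)
    (hS : IsUnit S.det) :
    (∀ σ : Equiv.Perm (Fin n), spectracone (σ.permMatrix ℂ * S) = spectracone S) ∧
    (∀ v : Fin n → ℝ, (∀ i, 0 < v i) →
      spectracone (diagonal (fun i => (v i : ℂ)) * S) = spectracone S) ∧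
    (∀ w : Fin n → ℂ, (∀ i, w i ≠ 0) →
      spectracone (S * diagonal w) = spectracone S) ∧
    (∀ α : ℂ, α ≠ 0 → spectracone (α • S) = spectracone S) ∧
    (spectracone (S.map (starRingEnd ℂ)) =
      {y | ∃ x ∈ spectracone S, y = fun i => (starRingEnd ℂ) (x i)}) ∧
    (spectracone (Sᵀ)⁻¹ = spectracone S) := by
  have hSS : S * S⁻¹ = 1 := Matrix.mul_nonsing_inv S hS
  refine ⟨?_, ?_, ?_, ?_, ?_, ?_⟩
  · -- permutation
    intro σ
    ext x
    simp only [spectracone, Set.mem_setOf_eq]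
    have key : σ.permMatrix ℂ * S * diagonal x * (σ.permMatrix ℂ * S)⁻¹ =
        (S * diagonal x * S⁻¹).submatrix σ σ := by
      rw [Matrix.mul_inv_rev, permMatrix_inv]
      have h1 : σ.permMatrix ℂ * S * diagonal x * (S⁻¹ * σ⁻¹.permMatrix ℂ) =
          σ.permMatrix ℂ * (S * diagonal x * S⁻¹) * σ⁻¹.permMatrix ℂ := by
        noncomm_ring
      rw [h1, show σ.permMatrix ℂ = σ.toPEquiv.toMatrix from rfl,
        show σ⁻¹.permMatrix ℂ = (σ⁻¹ : Equiv.Perm (Fin n)).toPEquiv.toMatrix from rfl,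
        PEquiv.toMatrix_toPEquiv_mul, PEquiv.mul_toMatrix_toPEquiv]
      ext i j
      simp [Matrix.submatrix_apply, Equiv.Perm.inv_def]
    rw [key, EntrywiseNonneg.submatrix_iff]
  · -- positive diagonal on the left
    intro v hv
    ext x
    simp only [spectracone, Set.mem_setOf_eq]
    set D : Matrix (Fin n) (Fin n) ℂ := diagonal (fun i => (v i : ℂ)) with hD
    have hDinv : D⁻¹ = diagonal (fun i => (((v i)⁻¹ : ℝ) : ℂ)) := by
      apply inv_eq_right_inv
      rw [hD, Matrix.diagonal_mul_diagonal, ← Matrix.diagonal_one]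
      have harg : (fun i => (v i : ℂ) * (((v i)⁻¹ : ℝ) : ℂ)) = fun _ => (1 : ℂ) := by
        funext i
        have hne : (v i : ℂ) ≠ 0 := by exact_mod_cast (ne_of_gt (hv i))
        push_cast
        field_simp
      rw [harg]
    have key : ∀ i j, (D * S * diagonal x * (D * S)⁻¹) i j =
        ((v i : ℂ)) * (S * diagonal x * S⁻¹) i j * (((v j)⁻¹ : ℝ) : ℂ) := by
      intro i j
      rw [Matrix.mul_inv_rev]
      have h1 : D * S * diagonal x * (S⁻¹ * D⁻¹) =
          D * (S * diagonal x * S⁻¹) * D⁻¹ := by noncomm_ring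
      rw [h1, hDinv, hD]
      simp [Matrix.diagonal_mul, Matrix.mul_diagonal]
    have him : ∀ (a b : ℝ) (z : ℂ), ((a : ℂ) * z * (b : ℂ)).im = (a * b) * z.im := by
      intro a b z; simp [Complex.mul_im, Complex.mul_re]; ring
    have hre : ∀ (a b : ℝ) (z : ℂ), ((a : ℂ) * z * (b : ℂ)).re = (a * b) * z.re := by
      intro a b z; simp [Complex.mul_im, Complex.mul_re]; ring
    constructor
    · intro h i j
      have hij := h i j
      rw [key i j, him, hre] at hij
      have hpos : 0 < v i * (v j)⁻¹ := mul_pos (hv i) (inv_pos.mpr (hv j))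
      constructor
      · exact (mul_eq_zero.mp hij.1).resolve_left (ne_of_gt hpos)
      · exact nonneg_of_mul_nonneg_right hij.2 hpos
    · intro h i j
      have hij := h i j
      rw [key i j, him, hre]
      have hpos : 0 ≤ v i * (v j)⁻¹ := le_of_lt (mul_pos (hv i) (inv_pos.mpr (hv j)))
      exact ⟨by rw [hij.1, mul_zero], mul_nonneg hpos hij.2⟩
  · -- right diagonal, totally nonzero
    intro w hw
    ext x
    simp only [spectracone, Set.mem_setOf_eq]
    have hwinv : (diagonal w)⁻¹ = diagonal (fun i => (w i)⁻¹) := by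
      apply inv_eq_right_inv
      rw [Matrix.diagonal_mul_diagonal, ← Matrix.diagonal_one]
      have harg : (fun i => w i * (w i)⁻¹) = fun _ => (1 : ℂ) := by
        funext i
        exact mul_inv_cancel₀ (hw i)
      rw [harg]
    have key : S * diagonal w * diagonal x * (S * diagonal w)⁻¹ =
        S * diagonal x * S⁻¹ := by
      rw [Matrix.mul_inv_rev, hwinv]
      have h1 : S * diagonal w * diagonal x * (diagonal (fun i => (w i)⁻¹) * S⁻¹) =
          S * (diagonal w * diagonal x * diagonal (fun i => (w i)⁻¹)) * S⁻¹ := by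
        noncomm_ring
      rw [h1, Matrix.diagonal_mul_diagonal, Matrix.diagonal_mul_diagonal]
      have harg : (fun i => w i * x i * (w i)⁻¹) = x := by
        funext i
        rw [mul_comm (w i) (x i), mul_assoc, mul_inv_cancel₀ (hw i), mul_one]
      rw [harg]
    rw [key]
  · -- scalar
    intro α hα
    ext x
    simp only [spectracone, Set.mem_setOf_eq]
    have hinv : (α • S)⁻¹ = α⁻¹ • S⁻¹ := by
      apply inv_eq_right_inv
      rw [smul_mul_assoc, mul_smul_comm, smul_smul, mul_inv_cancel₀ hα, one_smul, hSS]
    have key : α • S * diagonal x * (α • S)⁻¹ = S * diagonal x * S⁻¹ := by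
      rw [hinv, smul_mul_assoc, smul_mul_assoc, mul_smul_comm, smul_smul,
        mul_inv_cancel₀ hα, one_smul]
    rw [key]
  · -- conjugation
    ext y
    simp only [spectracone, Set.mem_setOf_eq, Set.mem_setOf_eq]
    have hconjinv : (S.map (starRingEnd ℂ))⁻¹ = S⁻¹.map (starRingEnd ℂ) := by
      apply inv_eq_right_inv
      rw [← Matrix.map_mul, hSS, Matrix.map_one _ (map_zero _) (map_one _)]
    have key : ∀ z : Fin n → ℂ, S.map (starRingEnd ℂ) * diagonal z *
        (S.map (starRingEnd ℂ))⁻¹ =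
        (S * diagonal (fun i => (starRingEnd ℂ) (z i)) * S⁻¹).map (starRingEnd ℂ) := by
      intro z
      rw [hconjinv, Matrix.map_mul, Matrix.map_mul]
      congr 2
      rw [Matrix.diagonal_map (map_zero _)]
      have : (fun i => (starRingEnd ℂ) ((starRingEnd ℂ) (z i))) = z := by
        funext i; simp
      rw [this]
    constructor
    · intro h
      refine ⟨fun i => (starRingEnd ℂ) (y i), ?_, ?_⟩
      · rw [key y] at h
        exact (EntrywiseNonneg.map_conj_iff _).mp h
      · ext i; simp
    · rintro ⟨x, hx, rfl⟩
      rw [key]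
      rw [EntrywiseNonneg.map_conj_iff]
      have : (fun i => (starRingEnd ℂ) ((starRingEnd ℂ) (x i))) = x := by
        ext i; simp
      rw [this]
      exact hx
  · -- inverse transpose
    ext x
    simp only [spectracone, Set.mem_setOf_eq]
    have hdet : IsUnit (Sᵀ).det := by rwa [Matrix.det_transpose]
    have key : (Sᵀ)⁻¹ * diagonal x * ((Sᵀ)⁻¹)⁻¹ = (S * diagonal x * S⁻¹)ᵀ := by
      rw [Matrix.nonsing_inv_nonsing_inv _ hdet]
      rw [Matrix.transpose_mul, Matrix.transpose_mul, Matrix.diagonal_transpose,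
        Matrix.transpose_nonsing_inv]
      noncomm_ring
    rw [key, EntrywiseNonneg.transpose_iff]
end

section
/- An invertible S ∈ GL_n(ℂ) is a Perron similarity (i.e., S diag(d) S^{−1} is an irreducible nonnegative matrix for some diagonal d) if and only if there exists a unique index k ∈ {1,...,n} such that S e_k = αx and e_k^⊤ S^{−1} = β y^⊤ for some nonzero complex scalars α, β with αβ > 0 and positive real vectors x, y. -/
open Finset Matrix

/-- A square matrix is irreducible if it is not permutation-similar to a nontrivial
block upper-triangular matrix; equivalently, for every nonempty proper subset `J` of
indices there are `i ∈ J` and `j ∉ J` with `A i j ≠ 0`. -/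
def MatIrreducible {n : ℕ} (A : Matrix (Fin n) (Fin n) ℝ) : Prop :=
  ∀ J : Finset (Fin n), J.Nonempty → J ≠ Finset.univ → ∃ i ∈ J, ∃ j ∉ J, A i j ≠ 0

/-- `S` is a Perron similarity: it diagonalizes some irreducible nonnegative matrix. -/
def IsPerronSimilarity {n : ℕ} (S : Matrix (Fin n) (Fin n) ℂ) : Prop :=
  ∃ (d : Fin n → ℂ) (A : Matrix (Fin n) (Fin n) ℝ),
    (∀ i j, 0 ≤ A i j) ∧ MatIrreducible A ∧
    A.map Complex.ofReal = S * diagonal d * S⁻¹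

variable {n : ℕ}

lemma oneAdd_nonneg (A : Matrix (Fin n) (Fin n) ℝ) (hA : ∀ i j, 0 ≤ A i j) (l j : Fin n) :
    0 ≤ (1 + A) l j := by
  simp only [Matrix.add_apply, Matrix.one_apply]
  rcases eq_or_ne l j with h | h <;> simp [h] <;> [linarith [hA j j]; exact hA l j]

lemma pow_nonneg_entries (A : Matrix (Fin n) (Fin n) ℝ) (hA : ∀ i j, 0 ≤ A i j)
    (m : ℕ) : ∀ i j, 0 ≤ ((1 + A)^m) i j := by
  induction m with
  | zero => intro i j; rcases eq_or_ne i j with h | h <;> simp [Matrix.one_apply, h]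
  | succ m ih =>
    intro i j
    rw [pow_succ, Matrix.mul_apply]
    exact Finset.sum_nonneg fun l _ => mul_nonneg (ih i l) (oneAdd_nonneg A hA l j)

lemma pow_mono_entries (A : Matrix (Fin n) (Fin n) ℝ) (hA : ∀ i j, 0 ≤ A i j)
    (m : ℕ) (i j : Fin n) : ((1 + A)^m) i j ≤ ((1 + A)^(m+1)) i j := by
  rw [pow_succ, Matrix.mul_apply]
  calc ((1+A)^m) i j ≤ ((1+A)^m) i j * (1 + A) j j := by
        refine le_mul_of_one_le_right (pow_nonneg_entries A hA m i j) ?_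
        simp [Matrix.add_apply, Matrix.one_apply]; linarith [hA j j]
    _ ≤ ∑ l, ((1+A)^m) i l * (1 + A) l j :=
        Finset.single_le_sum (f := fun l => ((1+A)^m) i l * (1 + A) l j)
          (fun l _ => mul_nonneg (pow_nonneg_entries A hA m i l) (oneAdd_nonneg A hA l j))
          (mem_univ j)

lemma pow_diag_pos (A : Matrix (Fin n) (Fin n) ℝ) (hA : ∀ i j, 0 ≤ A i j)
    (m : ℕ) (i : Fin n) : 0 < ((1 + A)^m) i i := by
  induction m with
  | zero => simp [Matrix.one_apply]
  | succ m ih => exact lt_of_lt_of_le ih (pow_mono_entries A hA m i i)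

lemma B_pos (hn : 1 ≤ n) (A : Matrix (Fin n) (Fin n) ℝ) (hA : ∀ i j, 0 ≤ A i j)
    (hirr : MatIrreducible A) (i j : Fin n) : 0 < ((1 + A)^(n-1)) i j := by
  set J : ℕ → Finset (Fin n) := fun m => univ.filter (fun j => 0 < ((1 + A)^m) i j) with hJ
  have hmemJ : ∀ m j, j ∈ J m ↔ 0 < ((1 + A)^m) i j := by intro m j; simp [hJ]
  have hiJ : ∀ m, i ∈ J m := fun m => (hmemJ m i).2 (pow_diag_pos A hA m i)
  have hmono : ∀ m, J m ⊆ J (m+1) := by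
    intro m x hx
    exact (hmemJ _ x).2 (lt_of_lt_of_le ((hmemJ m x).1 hx) (pow_mono_entries A hA m i x))
  have hgrow : ∀ m, J m ≠ univ → ∃ x ∈ J (m+1), x ∉ J m := by
    intro m hne
    obtain ⟨l, hl, j', hj', hAlj⟩ := hirr (J m) ⟨i, hiJ m⟩ hne
    refine ⟨j', ?_, hj'⟩
    have hlj : l ≠ j' := fun h => hj' (h ▸ hl)
    have hterm : 0 < ((1+A)^m) i l * (1 + A) l j' := by
      have h1 : 0 < (1 + A) l j' := by
        simp only [Matrix.add_apply, Matrix.one_apply, if_neg hlj, zero_add]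
        exact lt_of_le_of_ne (hA l j') (Ne.symm hAlj)
      exact mul_pos ((hmemJ m l).1 hl) h1
    refine (hmemJ _ j').2 ?_
    rw [pow_succ, Matrix.mul_apply]
    refine lt_of_lt_of_le hterm (Finset.single_le_sum
      (f := fun l => ((1+A)^m) i l * (1 + A) l j')
      (fun l _ => mul_nonneg (pow_nonneg_entries A hA m i l) (oneAdd_nonneg A hA l j'))
      (mem_univ l))
  have hcard : ∀ m, J m = univ ∨ m + 1 ≤ (J m).card := by
    intro m
    induction m with
    | zero =>
      rcases eq_or_ne (J 0) univ with h | h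
      · exact Or.inl h
      · exact Or.inr (Finset.card_pos.2 ⟨i, hiJ 0⟩)
    | succ m ih =>
      rcases eq_or_ne (J (m+1)) univ with h | h
      · exact Or.inl h
      · refine Or.inr ?_
        have hm : J m ≠ univ := fun he => h (Finset.univ_subset_iff.1 (he ▸ hmono m))
        obtain ⟨x, hx1, hx2⟩ := hgrow m hm
        rcases ih with h' | h'
        · exact absurd h' hm
        · have : (J m).card < (J (m+1)).card :=
            Finset.card_lt_card (Finset.ssubset_iff_of_subset (hmono m) |>.2 ⟨x, hx1, hx2⟩)
          omega
  have : J (n-1) = univ := by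
    rcases hcard (n-1) with h | h
    · exact h
    · have : (J (n-1)).card ≤ n := by
        simpa using Finset.card_le_card (Finset.subset_univ (J (n-1)))
      have hcf : Fintype.card (Fin n) = n := Fintype.card_fin n
      exact Finset.eq_univ_of_card _ (by omega)
  exact (hmemJ _ j).1 (this ▸ mem_univ j)
lemma mulVec_strict_pos (B : Matrix (Fin n) (Fin n) ℝ) (hB : ∀ i j, 0 < B i j)
    (x : Fin n → ℝ) (hx : ∀ i, 0 ≤ x i) (hx0 : x ≠ 0) (i : Fin n) :
    0 < B.mulVec x i := by
  obtain ⟨j0, hj0⟩ : ∃ j, x j ≠ 0 := Function.ne_iff.1 hx0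
  have hj0' : 0 < x j0 := lt_of_le_of_ne (hx j0) (Ne.symm hj0)
  rw [Matrix.mulVec, dotProduct]
  refine lt_of_lt_of_le (mul_pos (hB i j0) hj0') ?_
  exact Finset.single_le_sum (f := fun j => B i j * x j)
    (fun j _ => mul_nonneg (hB i j).le (hx j)) (mem_univ j0)

lemma perron_aux_closed (B : Matrix (Fin n) (Fin n) ℝ) :
    IsClosed {p : ℝ × (Fin n → ℝ) |
      (∀ i, 0 ≤ p.2 i) ∧ (∑ i, p.2 i = 1) ∧ 0 ≤ p.1 ∧ ∀ i, p.1 * p.2 i ≤ B.mulVec p.2 i} := by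
  have c2 : Continuous fun p : ℝ × (Fin n → ℝ) => ∑ i, p.2 i := by fun_prop
  have h1 : IsClosed {p : ℝ × (Fin n → ℝ) | ∀ i, 0 ≤ p.2 i} := by
    rw [Set.setOf_forall]
    exact isClosed_iInter fun i => isClosed_le continuous_const (by fun_prop)
  have h2 : IsClosed {p : ℝ × (Fin n → ℝ) | ∑ i, p.2 i = 1} := isClosed_eq c2 continuous_const
  have h3 : IsClosed {p : ℝ × (Fin n → ℝ) | 0 ≤ p.1} := isClosed_le continuous_const continuous_fst
  have h4 : IsClosed {p : ℝ × (Fin n → ℝ) | ∀ i, p.1 * p.2 i ≤ B.mulVec p.2 i} := by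
    rw [Set.setOf_forall]
    refine isClosed_iInter fun i => ?_
    have : Continuous fun p : ℝ × (Fin n → ℝ) => B.mulVec p.2 i := by
      simp only [Matrix.mulVec, dotProduct]
      fun_prop
    exact isClosed_le (by fun_prop) this
  have : {p : ℝ × (Fin n → ℝ) |
      (∀ i, 0 ≤ p.2 i) ∧ (∑ i, p.2 i = 1) ∧ 0 ≤ p.1 ∧ ∀ i, p.1 * p.2 i ≤ B.mulVec p.2 i}
      = ({p : ℝ × (Fin n → ℝ) | ∀ i, 0 ≤ p.2 i} ∩ {p | ∑ i, p.2 i = 1}) ∩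
        ({p | 0 ≤ p.1} ∩ {p | ∀ i, p.1 * p.2 i ≤ B.mulVec p.2 i}) := by
    ext p; simp [Set.mem_inter_iff]; tauto
  rw [this]
  exact ((h1.inter h2).inter (h3.inter h4))

lemma perron_pos (hn : 1 ≤ n) (B : Matrix (Fin n) (Fin n) ℝ) (hB : ∀ i j, 0 < B i j) :
    ∃ ρ : ℝ, 0 < ρ ∧ ∃ v : Fin n → ℝ, (∀ i, 0 < v i) ∧ B.mulVec v = ρ • v := by
  have i0 : Fin n := ⟨0, hn⟩
  set M : ℝ := ∑ i, ∑ j, B i j with hM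
  set C : Set (ℝ × (Fin n → ℝ)) :=
    {p | (∀ i, 0 ≤ p.2 i) ∧ (∑ i, p.2 i = 1) ∧ 0 ≤ p.1 ∧ ∀ i, p.1 * p.2 i ≤ B.mulVec p.2 i}
    with hC
  have hbound : ∀ p ∈ C, p.1 ≤ M := by
    rintro ⟨t, x⟩ ⟨hx, hsum, ht, hle⟩
    have h2 : ∀ j, x j ≤ 1 := by
      intro j
      rw [← hsum]
      exact Finset.single_le_sum (fun i _ => hx i) (mem_univ j)
    calc t = ∑ i, t * x i := by rw [← Finset.mul_sum, hsum, mul_one]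
      _ ≤ ∑ i, B.mulVec x i := Finset.sum_le_sum fun i _ => hle i
      _ = ∑ i, ∑ j, B i j * x j := by simp [Matrix.mulVec, dotProduct]
      _ ≤ ∑ i, ∑ j, B i j := by
          refine Finset.sum_le_sum fun i _ => Finset.sum_le_sum fun j _ => ?_
          calc B i j * x j ≤ B i j * 1 := mul_le_mul_of_nonneg_left (h2 j) (hB i j).le
            _ = B i j := mul_one _
  have hsub : C ⊆ Set.Icc ((0 : ℝ), (fun _ => (0:ℝ) : Fin n → ℝ)) (M, fun _ => (1:ℝ)) := by
    rintro ⟨t, x⟩ hp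
    obtain ⟨hx, hsum, ht, hle⟩ := hp
    constructor
    · exact ⟨ht, fun i => hx i⟩
    · refine ⟨hbound _ ⟨hx, hsum, ht, hle⟩, fun i => ?_⟩
      rw [← hsum]
      exact Finset.single_le_sum (fun i _ => hx i) (mem_univ i)
  have hcompact : IsCompact C := IsCompact.of_isClosed_subset isCompact_Icc (perron_aux_closed B) hsub
  -- nonempty, with a positive t element
  set x0 : Fin n → ℝ := fun _ => 1/n with hx0
  have hx0nn : ∀ i, 0 ≤ x0 i := fun i => by positivity
  have hx0sum : ∑ i, x0 i = 1 := by
    simp [hx0]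
    field_simp
  have hx0ne : x0 ≠ 0 := by
    intro h
    have := congrFun h i0
    simp [hx0] at this
    omega
  obtain ⟨i1, _, hi1⟩ := Finset.exists_min_image univ (fun i => B.mulVec x0 i) ⟨i0, mem_univ i0⟩
  set t0 : ℝ := B.mulVec x0 i1 with ht0
  have ht0pos : 0 < t0 := mulVec_strict_pos B hB x0 hx0nn hx0ne i1
  have hmem0 : ((t0, x0) : ℝ × (Fin n → ℝ)) ∈ C := by
    refine ⟨hx0nn, hx0sum, ht0pos.le, fun i => ?_⟩
    calc t0 * x0 i ≤ t0 * 1 := by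
          refine mul_le_mul_of_nonneg_left ?_ ht0pos.le
          rw [hx0]
          simp only
          rw [div_le_one (by exact_mod_cast hn)]
          exact_mod_cast hn
      _ = t0 := mul_one _
      _ ≤ B.mulVec x0 i := hi1 i (mem_univ i)
  obtain ⟨p, hpC, hpmax⟩ := hcompact.exists_isMaxOn ⟨_, hmem0⟩ continuous_fst.continuousOn
  obtain ⟨hv0, hvsum, hρ0, hρle⟩ := hpC
  set ρ : ℝ := p.1 with hρ
  set v : Fin n → ℝ := p.2 with hv
  have hρpos : 0 < ρ := lt_of_lt_of_le ht0pos (hpmax hmem0)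
  have hvne : v ≠ 0 := by
    intro h
    rw [h] at hvsum
    simp at hvsum
  -- the eigen equation
  have heig : B.mulVec v = ρ • v := by
    by_contra hne
    set z : Fin n → ℝ := B.mulVec v - ρ • v with hz
    have hznn : ∀ i, 0 ≤ z i := fun i => by simpa [hz] using hρle i
    have hzne : z ≠ 0 := fun h => hne (by rwa [hz, sub_eq_zero] at h)
    set u : Fin n → ℝ := B.mulVec v with hu
    have hupos : ∀ i, 0 < u i := mulVec_strict_pos B hB v hv0 hvne
    have hBz : ∀ i, 0 < B.mulVec z i := mulVec_strict_pos B hB z hznn hzne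
    have hBzu : ∀ i, ρ * u i < B.mulVec u i := by
      intro i
      have : B.mulVec z i = B.mulVec u i - ρ * u i := by
        rw [hz, Matrix.mulVec_sub, Matrix.mulVec_smul]
        simp [hu]
      linarith [hBz i, this]
    obtain ⟨i2, _, hi2⟩ := Finset.exists_min_image univ (fun i => B.mulVec u i / u i) ⟨i0, mem_univ i0⟩
    set t1 : ℝ := B.mulVec u i2 / u i2 with ht1
    have ht1ρ : ρ < t1 := by
      rw [ht1, lt_div_iff₀ (hupos i2)]
      linarith [hBzu i2]
    have ht1le : ∀ i, t1 * u i ≤ B.mulVec u i := by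
      intro i
      have := hi2 i (mem_univ i)
      rw [le_div_iff₀ (hupos i)] at this
      linarith
    set s : ℝ := ∑ i, u i with hs
    have hspos : 0 < s := Finset.sum_pos (fun i _ => hupos i) ⟨i0, mem_univ i0⟩
    set u' : Fin n → ℝ := (1/s) • u with hu'
    have hmem1 : ((t1, u') : ℝ × (Fin n → ℝ)) ∈ C := by
      have hsinv : (0:ℝ) ≤ 1/s := div_nonneg zero_le_one hspos.le
      refine ⟨fun i => by
          rw [hu']; simp only [Pi.smul_apply, smul_eq_mul]
          exact mul_nonneg hsinv (hupos i).le,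
        ?_, (hρpos.trans ht1ρ).le, fun i => ?_⟩
      · rw [hu']
        simp only [Pi.smul_apply, smul_eq_mul, ← Finset.mul_sum, ← hs]
        field_simp
      · rw [hu', Matrix.mulVec_smul]
        simp only [Pi.smul_apply, smul_eq_mul]
        calc t1 * (1/s * u i) = 1/s * (t1 * u i) := by ring
          _ ≤ 1/s * B.mulVec u i := mul_le_mul_of_nonneg_left (ht1le i) hsinv
    exact absurd (hpmax hmem1) (not_le.2 ht1ρ)
  refine ⟨ρ, hρpos, v, fun i => ?_, heig⟩
  have : ρ * v i = B.mulVec v i := by rw [heig]; simp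
  have hp := mulVec_strict_pos B hB v hv0 hvne i
  nlinarith [hp, hρpos, hv0 i]

lemma perron_simple_pos (hn : 1 ≤ n) (B : Matrix (Fin n) (Fin n) ℝ) (hB : ∀ i j, 0 < B i j)
    (ρ : ℝ) (hρ : 0 < ρ) (v : Fin n → ℝ) (hv : ∀ i, 0 < v i) (hvec : B.mulVec v = ρ • v)
    (z : Fin n → ℝ) (hz : B.mulVec z = ρ • z) : ∃ t : ℝ, z = t • v := by
  have i0 : Fin n := ⟨0, hn⟩
  obtain ⟨i2, _, hi2⟩ := Finset.exists_min_image univ (fun i => z i / v i) ⟨i0, mem_univ i0⟩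
  set t : ℝ := z i2 / v i2 with ht
  refine ⟨t, ?_⟩
  set z' : Fin n → ℝ := z - t • v with hz'
  have hz'nn : ∀ i, 0 ≤ z' i := by
    intro i
    have := hi2 i (mem_univ i)
    rw [ht, div_le_div_iff₀ (hv i2) (hv i)] at this
    simp only [hz', Pi.sub_apply, Pi.smul_apply, smul_eq_mul, sub_nonneg, ht]
    rw [div_mul_eq_mul_div, div_le_iff₀ (hv i2)]
    linarith
  have hz'i2 : z' i2 = 0 := by
    simp only [hz', Pi.sub_apply, Pi.smul_apply, smul_eq_mul, ht]
    rw [div_mul_cancel₀ _ (hv i2).ne', sub_self]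
  have hz'eig : B.mulVec z' = ρ • z' := by
    rw [hz', Matrix.mulVec_sub, Matrix.mulVec_smul, hz, hvec, smul_sub, smul_smul, smul_smul, mul_comm]
  by_contra hne
  have hz'ne : z' ≠ 0 := by
    intro h
    exact hne (by rwa [hz', sub_eq_zero] at h)
  have := mulVec_strict_pos B hB z' hz'nn hz'ne i2
  rw [hz'eig] at this
  simp [hz'i2] at this

lemma pow_mulVec_eig (M : Matrix (Fin n) (Fin n) ℝ) (μ : ℝ) (z : Fin n → ℝ)
    (h : M.mulVec z = μ • z) (m : ℕ) : (M^m).mulVec z = μ^m • z := by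
  induction m with
  | zero => simp
  | succ m ih =>
    rw [pow_succ, ← Matrix.mulVec_mulVec, h, Matrix.mulVec_smul, ih, smul_smul, pow_succ]
    ring_nf

lemma perron_irred (hn : 2 ≤ n) (A : Matrix (Fin n) (Fin n) ℝ) (hA : ∀ i j, 0 ≤ A i j)
    (hirr : MatIrreducible A) :
    ∃ lam : ℝ, 0 < lam ∧ ∃ v : Fin n → ℝ, (∀ i, 0 < v i) ∧ A.mulVec v = lam • v ∧
      ∀ z : Fin n → ℝ, A.mulVec z = lam • z → ∃ t : ℝ, z = t • v := by
  have hn1 : 1 ≤ n := by omega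
  have i0 : Fin n := ⟨0, hn1⟩
  set B : Matrix (Fin n) (Fin n) ℝ := (1 + A)^(n-1) with hB
  have hBpos : ∀ i j, 0 < B i j := B_pos hn1 A hA hirr
  obtain ⟨ρ, hρ, v, hv, hvec⟩ := perron_pos hn1 B hBpos
  have hcomm : A * B = B * A := by
    have h1 : Commute A (1 + A) := (Commute.one_right A).add_right (Commute.refl A)
    exact (h1.pow_right (n-1)).eq
  have hAveig : B.mulVec (A.mulVec v) = ρ • (A.mulVec v) := by
    rw [Matrix.mulVec_mulVec, ← hcomm, ← Matrix.mulVec_mulVec, hvec, Matrix.mulVec_smul]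
  obtain ⟨lam, hlam⟩ := perron_simple_pos hn1 B hBpos ρ hρ v hv hvec _ hAveig
  have hlampos : 0 < lam := by
    have hnn : 0 ≤ lam := by
      have h1 : A.mulVec v i0 = lam * v i0 := by rw [hlam]; simp
      have h2 : 0 ≤ A.mulVec v i0 := by
        rw [Matrix.mulVec, dotProduct]
        exact Finset.sum_nonneg fun j _ => mul_nonneg (hA i0 j) (hv j).le
      nlinarith [hv i0]
    rcases lt_or_eq_of_le hnn with h | h
    · exact h
    · exfalso
      have hzero : ∀ i j, A i j = 0 := by
        intro i j
        have h1 : A.mulVec v i = 0 := by rw [hlam, ← h]; simp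
        have h2 : ∀ l ∈ univ, 0 ≤ A i l * v l := fun l _ => mul_nonneg (hA i l) (hv l).le
        have h3 := (Finset.sum_eq_zero_iff_of_nonneg h2).1 h1 j (mem_univ j)
        have := (hv j).ne'
        rcases mul_eq_zero.1 h3 with h4 | h4
        · exact h4
        · exact absurd h4 this
      obtain ⟨j1, hj1⟩ := Fintype.exists_ne_of_one_lt_card (by simp [Fintype.card_fin]; omega) i0
      obtain ⟨i, _, j, _, hne⟩ := hirr {i0} ⟨i0, Finset.mem_singleton_self i0⟩ (by
        intro h
        have : j1 ∈ ({i0} : Finset (Fin n)) := h ▸ mem_univ j1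
        exact hj1 (Finset.mem_singleton.1 this))
      exact hne (hzero i j)
  refine ⟨lam, hlampos, v, hv, hlam, fun z hz => ?_⟩
  have hBz : B.mulVec z = ρ • z := by
    have h1 : (1 + A).mulVec z = (1 + lam) • z := by
      rw [Matrix.add_mulVec, Matrix.one_mulVec, hz, add_smul, one_smul]
    have h2 := pow_mulVec_eig (1 + A) (1 + lam) z h1 (n-1)
    have h3 : (1 + A).mulVec v = (1 + lam) • v := by
      rw [Matrix.add_mulVec, Matrix.one_mulVec, hlam, add_smul, one_smul]
    have h4 := pow_mulVec_eig (1 + A) (1 + lam) v h3 (n-1)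
    have hρeq : ρ = (1 + lam)^(n-1) := by
      have h5 : ρ * v i0 = (1 + lam)^(n-1) * v i0 := by
        have e1 : B.mulVec v i0 = ρ * v i0 := by rw [hvec]; simp
        have e2 : B.mulVec v i0 = (1 + lam)^(n-1) * v i0 := by rw [hB, h4]; simp
        rw [← e1, e2]
      have := (hv i0).ne'
      field_simp at h5
      exact h5
    rw [hB, h2, hρeq]
  exact perron_simple_pos hn1 B hBpos ρ hρ v hv hvec z hBz

lemma matIrreducible_transpose (A : Matrix (Fin n) (Fin n) ℝ) (h : MatIrreducible A) :
    MatIrreducible Aᵀ := by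
  intro J hJne hJuniv
  have hex : ∃ x, x ∉ J := by
    by_contra hc
    push_neg at hc
    exact hJuniv (Finset.eq_univ_iff_forall.2 hc)
  obtain ⟨x, hx⟩ := hex
  have hJc : (Jᶜ : Finset (Fin n)).Nonempty := ⟨x, Finset.mem_compl.2 hx⟩
  have hJcuniv : (Jᶜ : Finset (Fin n)) ≠ univ := by
    intro hc
    obtain ⟨y, hy⟩ := hJne
    have : y ∈ (Jᶜ : Finset (Fin n)) := hc ▸ mem_univ y
    exact Finset.mem_compl.1 this hy
  obtain ⟨i, hi, j, hj, hA⟩ := h Jᶜ hJc hJcuniv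
  refine ⟨j, ?_, i, fun hc => (Finset.mem_compl.1 hi) hc, ?_⟩
  · by_contra hc
    exact hj (Finset.mem_compl.2 hc)
  · simpa [Matrix.transpose_apply] using hA

lemma mulVec_map_ofReal (A : Matrix (Fin n) (Fin n) ℝ) (v : Fin n → ℝ) :
    (A.map Complex.ofReal).mulVec (fun i => (v i : ℂ)) = fun i => ((A.mulVec v) i : ℂ) := by
  funext i
  simp [Matrix.mulVec, dotProduct, Matrix.map_apply]

lemma re_mulVec (A : Matrix (Fin n) (Fin n) ℝ) (u : Fin n → ℂ) (i : Fin n) :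
    ((A.map Complex.ofReal).mulVec u i).re = A.mulVec (fun j => (u j).re) i := by
  simp [Matrix.mulVec, dotProduct, Matrix.map_apply, Complex.re_sum]

lemma im_mulVec (A : Matrix (Fin n) (Fin n) ℝ) (u : Fin n → ℂ) (i : Fin n) :
    ((A.map Complex.ofReal).mulVec u i).im = A.mulVec (fun j => (u j).im) i := by
  simp [Matrix.mulVec, dotProduct, Matrix.map_apply, Complex.im_sum]

lemma eigenspace_complex (A : Matrix (Fin n) (Fin n) ℝ) (lam : ℝ) (v : Fin n → ℝ)
    (hsimp : ∀ z : Fin n → ℝ, A.mulVec z = lam • z → ∃ t : ℝ, z = t • v)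
    (u : Fin n → ℂ) (hu : (A.map Complex.ofReal).mulVec u = (lam : ℂ) • u) :
    ∃ γ : ℂ, u = γ • (fun i => (v i : ℂ)) := by
  have hre : A.mulVec (fun j => (u j).re) = lam • (fun j => (u j).re) := by
    funext i
    rw [← re_mulVec, hu]
    simp [Complex.smul_re]
  have him : A.mulVec (fun j => (u j).im) = lam • (fun j => (u j).im) := by
    funext i
    rw [← im_mulVec, hu]
    simp [Complex.smul_im]
  obtain ⟨a, ha⟩ := hsimp _ hre
  obtain ⟨b, hb⟩ := hsimp _ him
  refine ⟨⟨a, b⟩, ?_⟩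
  funext i
  have ha' : (u i).re = a * v i := by
    have := congrFun ha i
    simpa using this
  have hb' : (u i).im = b * v i := by
    have := congrFun hb i
    simpa using this
  apply Complex.ext <;> simp [Complex.ext_iff, ha', hb']

lemma forward_dir (hn : 2 ≤ n) (S : Matrix (Fin n) (Fin n) ℂ) (hS : IsUnit S.det)
    (h : IsPerronSimilarity S) :
    ∃ k : Fin n, ∃ (α β : ℂ) (x y : Fin n → ℝ),
      α ≠ 0 ∧ β ≠ 0 ∧ (∃ r : ℝ, 0 < r ∧ α * β = (r : ℂ)) ∧
      (∀ i, 0 < x i) ∧ (∀ i, 0 < y i) ∧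
      (∀ i, S i k = α * (x i : ℂ)) ∧ (∀ j, S⁻¹ k j = β * (y j : ℂ)) := by
  obtain ⟨d, A, hA0, hirr, hEq⟩ := h
  set Ac : Matrix (Fin n) (Fin n) ℂ := A.map Complex.ofReal with hAc
  have hinvl : S⁻¹ * S = 1 := nonsing_inv_mul S hS
  have hinvr : S * S⁻¹ = 1 := mul_nonsing_inv S hS
  have hAS : Ac * S = S * diagonal d := by
    rw [hEq, mul_assoc, hinvl, mul_one]
  have hinj : ∀ p q : Fin n → ℂ, S.mulVec p = S.mulVec q → p = q := by
    intro p q hpq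
    have h1 : S⁻¹.mulVec (S.mulVec p) = S⁻¹.mulVec (S.mulVec q) := by rw [hpq]
    rwa [Matrix.mulVec_mulVec, Matrix.mulVec_mulVec, hinvl, Matrix.one_mulVec,
      Matrix.one_mulVec] at h1
  -- Perron data for A and Aᵀ
  obtain ⟨lam, hlampos, v, hv, hvec, hsimp⟩ := perron_irred hn A hA0 hirr
  obtain ⟨lam', hlam'pos, w, hw, hvec', _⟩ :=
    perron_irred hn Aᵀ (fun i j => hA0 j i) (matIrreducible_transpose A hirr)
  set dp : ℝ := ∑ i, w i * v i with hdp
  have hdppos : 0 < dp :=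
    Finset.sum_pos (fun i _ => mul_pos (hw i) (hv i)) ⟨⟨0, by omega⟩, mem_univ _⟩
  have hlameq : lam' = lam := by
    have e1 : w ⬝ᵥ A.mulVec v = lam * dp := by
      rw [hvec, dotProduct_smul]
      simp [hdp, dotProduct, smul_eq_mul]
    have e2 : w ⬝ᵥ A.mulVec v = lam' * dp := by
      rw [Matrix.dotProduct_mulVec, ← Matrix.mulVec_transpose, hvec']
      simp only [hdp, dotProduct, Pi.smul_apply, smul_eq_mul, Finset.mul_sum]
      exact Finset.sum_congr rfl fun i _ => by ring
    rw [e1] at e2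
    exact mul_right_cancel₀ hdppos.ne' e2.symm
  set vc : Fin n → ℂ := fun i => (v i : ℂ) with hvc
  set wc : Fin n → ℂ := fun i => (w i : ℂ) with hwc
  have hvceig : Ac.mulVec vc = (lam : ℂ) • vc := by
    rw [hAc, hvc, mulVec_map_ofReal, hvec]
    funext i
    push_cast
    simp
  have hwceig : wc ᵥ* Ac = (lam : ℂ) • wc := by
    have h1 : wc ᵥ* Ac = Acᵀ.mulVec wc := (Matrix.mulVec_transpose Ac wc).symm
    have h2 : Acᵀ = Aᵀ.map Complex.ofReal := by rw [hAc, Matrix.transpose_map]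
    rw [h1, h2, hwc, mulVec_map_ofReal, hvec', hlameq]
    funext i
    push_cast
    simp
  -- coordinates of vc and wc in the eigenbasis
  set c : Fin n → ℂ := S⁻¹.mulVec vc with hc
  have hSc : S.mulVec c = vc := by
    rw [hc, Matrix.mulVec_mulVec, hinvr, Matrix.one_mulVec]
  have hdiagc : (diagonal d).mulVec c = (lam : ℂ) • c := by
    apply hinj
    rw [Matrix.mulVec_mulVec, ← hAS, ← Matrix.mulVec_mulVec, hSc, hvceig,
      Matrix.mulVec_smul, hSc]
  have hdc : ∀ j, d j * c j = (lam : ℂ) * c j := by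
    intro j
    have := congrFun hdiagc j
    simpa [Matrix.mulVec_diagonal] using this
  set c' : Fin n → ℂ := wc ᵥ* S with hc'
  have hdiagc' : c' ᵥ* diagonal d = (lam : ℂ) • c' := by
    rw [hc', Matrix.vecMul_vecMul, ← hAS, ← Matrix.vecMul_vecMul, hwceig,
      Matrix.smul_vecMul]
  have hdc' : ∀ j, c' j * d j = (lam : ℂ) * c' j := by
    intro j
    have := congrFun hdiagc' j
    simpa [Matrix.vecMul_diagonal] using this
  have hdpc : c' ⬝ᵥ c = (dp : ℂ) := by
    rw [hc, hc', Matrix.dotProduct_mulVec, Matrix.vecMul_vecMul, hinvr, Matrix.vecMul_one]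
    simp only [dotProduct, hvc, hwc, hdp]
    push_cast
    rfl
  have hdpc0 : c' ⬝ᵥ c ≠ 0 := by
    rw [hdpc]
    exact_mod_cast hdppos.ne'
  have hex : ∃ k, c' k * c k ≠ 0 := by
    by_contra hcon
    push_neg at hcon
    exact hdpc0 (Finset.sum_eq_zero fun j _ => hcon j)
  obtain ⟨k, hk⟩ := hex
  have hck : c k ≠ 0 := fun h => hk (by rw [h, mul_zero])
  have hc'k : c' k ≠ 0 := fun h => hk (by rw [h, zero_mul])
  have hdlam : ∀ j, c j ≠ 0 → d j = (lam : ℂ) := by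
    intro j hj
    have := hdc j
    field_simp at this
    exact this
  have hkey : ∀ j, d j = (lam : ℂ) → j = k := by
    intro j hj
    by_contra hjk
    have hcol : Ac.mulVec (fun i => S i j) = (lam : ℂ) • (fun i => S i j) := by
      funext i
      have h1 : Ac.mulVec (fun i' => S i' j) i = (Ac * S) i j := by
        simp [Matrix.mulVec, dotProduct, Matrix.mul_apply]
      rw [h1, hAS, Matrix.mul_diagonal, hj]
      simp [mul_comm]
    obtain ⟨γ, hγ⟩ := eigenspace_complex A lam v hsimp _ hcol
    have hsingle : S.mulVec (Pi.single j 1) = fun i => S i j := by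
      funext i
      simp [Matrix.mulVec, dotProduct, Pi.single_apply, mul_ite]
    have heq2 : S.mulVec (Pi.single j 1) = S.mulVec (γ • c) := by
      rw [hsingle, hγ, Matrix.mulVec_smul, hSc]
    have h3 := hinj _ _ heq2
    have h4 := congrFun h3 k
    have h5 := congrFun h3 j
    simp [Pi.single_apply, hjk] at h4 h5
    rcases h4 with h4 | h4
    · rw [h4] at h5
      simp at h5
    · exact hck h4
  have hsupp : ∀ j, j ≠ k → c j = 0 := by
    intro j hj
    by_contra hcj
    exact hj (hkey j (hdlam j hcj))
  have hdlam' : ∀ j, c' j ≠ 0 → d j = (lam : ℂ) := by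
    intro j hj
    have := hdc' j
    rw [mul_comm (c' j) (d j)] at this
    field_simp at this
    exact this
  have hsupp' : ∀ j, j ≠ k → c' j = 0 := by
    intro j hj
    by_contra hcj
    exact hj (hkey j (hdlam' j hcj))
  -- column k of S
  have hvck : ∀ i, vc i = S i k * c k := by
    intro i
    have h1 := congrFun hSc i
    rw [← h1]
    show (∑ j, S i j * c j) = S i k * c k
    exact Finset.sum_eq_single k (fun j _ hj => by rw [hsupp j hj, mul_zero]) (by simp)
  -- row k of S⁻¹
  have hwc' : wc = c' ᵥ* S⁻¹ := by
    rw [hc', Matrix.vecMul_vecMul, hinvr, Matrix.vecMul_one]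
  have hwcj : ∀ j, wc j = c' k * S⁻¹ k j := by
    intro j
    have h1 := congrFun hwc' j
    rw [h1]
    show (∑ i, c' i * S⁻¹ i j) = c' k * S⁻¹ k j
    exact Finset.sum_eq_single k (fun i _ hi => by rw [hsupp' i hi, zero_mul]) (by simp)
  -- product c k * c' k = dp
  have hprod : c' k * c k = (dp : ℂ) := by
    have h1 : (∑ j, c' j * c j) = c' k * c k :=
      Finset.sum_eq_single k (fun j _ hj => by rw [hsupp j hj, mul_zero]) (by simp)
    rw [← h1, ← hdpc]
    rfl
  refine ⟨k, (c k)⁻¹, (c' k)⁻¹, v, w, inv_ne_zero hck, inv_ne_zero hc'k,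
    ⟨dp⁻¹, inv_pos.2 hdppos, ?_⟩, hv, hw, ?_, ?_⟩
  · rw [← mul_inv]
    rw [mul_comm (c k) (c' k), hprod]
    push_cast
    rfl
  · intro i
    rw [inv_mul_eq_div, eq_div_iff hck]
    exact (hvck i).symm
  · intro j
    rw [inv_mul_eq_div, eq_div_iff hc'k]
    rw [show ((w j : ℂ)) = wc j from rfl, hwcj j]
    ring

lemma unique_dir (S : Matrix (Fin n) (Fin n) ℂ) (hS : IsUnit S.det) (k₁ k₂ : Fin n)
    (h₁ : ∃ (α β : ℂ) (x y : Fin n → ℝ),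
      α ≠ 0 ∧ β ≠ 0 ∧ (∃ r : ℝ, 0 < r ∧ α * β = (r : ℂ)) ∧
      (∀ i, 0 < x i) ∧ (∀ i, 0 < y i) ∧
      (∀ i, S i k₁ = α * (x i : ℂ)) ∧ (∀ j, S⁻¹ k₁ j = β * (y j : ℂ)))
    (h₂ : ∃ (α β : ℂ) (x y : Fin n → ℝ),
      α ≠ 0 ∧ β ≠ 0 ∧ (∃ r : ℝ, 0 < r ∧ α * β = (r : ℂ)) ∧
      (∀ i, 0 < x i) ∧ (∀ i, 0 < y i) ∧
      (∀ i, S i k₂ = α * (x i : ℂ)) ∧ (∀ j, S⁻¹ k₂ j = β * (y j : ℂ))) :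
    k₁ = k₂ := by
  by_contra hne
  obtain ⟨α₁, β₁, x₁, y₁, hα₁, hβ₁, _, hx₁, hy₁, hcol₁, hrow₁⟩ := h₁
  obtain ⟨α₂, β₂, x₂, y₂, hα₂, hβ₂, _, hx₂, hy₂, hcol₂, hrow₂⟩ := h₂
  have hinvl : S⁻¹ * S = 1 := nonsing_inv_mul S hS
  have h1 : (S⁻¹ * S) k₁ k₂ = 0 := by rw [hinvl]; exact Matrix.one_apply_ne hne
  rw [Matrix.mul_apply] at h1
  have h2 : (∑ j, S⁻¹ k₁ j * S j k₂) = β₁ * α₂ * ((∑ j, y₁ j * x₂ j : ℝ) : ℂ) := by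
    push_cast
    rw [Finset.mul_sum]
    refine Finset.sum_congr rfl fun j _ => ?_
    rw [hrow₁ j, hcol₂ j]
    ring
  rw [h2] at h1
  have h3 : (0:ℝ) < ∑ j, y₁ j * x₂ j :=
    Finset.sum_pos (fun j _ => mul_pos (hy₁ j) (hx₂ j)) ⟨k₁, mem_univ k₁⟩
  rcases mul_eq_zero.1 h1 with h | h
  · rcases mul_eq_zero.1 h with h' | h'
    · exact hβ₁ h'
    · exact hα₂ h'
  · rw [Complex.ofReal_eq_zero] at h
    exact h3.ne' h

lemma backward_dir (S : Matrix (Fin n) (Fin n) ℂ) (hS : IsUnit S.det) (k : Fin n)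
    (hk : ∃ (α β : ℂ) (x y : Fin n → ℝ),
      α ≠ 0 ∧ β ≠ 0 ∧ (∃ r : ℝ, 0 < r ∧ α * β = (r : ℂ)) ∧
      (∀ i, 0 < x i) ∧ (∀ i, 0 < y i) ∧
      (∀ i, S i k = α * (x i : ℂ)) ∧ (∀ j, S⁻¹ k j = β * (y j : ℂ))) :
    IsPerronSimilarity S := by
  obtain ⟨α, β, x, y, hα, hβ, ⟨r, hr, hαβ⟩, hx, hy, hcol, hrow⟩ := hk
  refine ⟨fun j => if j = k then 1 else 0, Matrix.of (fun i j => r * x i * y j),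
    fun i j => (mul_pos (mul_pos hr (hx i)) (hy j)).le, ?_, ?_⟩
  · intro J hJne hJuniv
    obtain ⟨i, hi⟩ := hJne
    have hex : ∃ j, j ∉ J := by
      by_contra hc
      push_neg at hc
      exact hJuniv (Finset.eq_univ_iff_forall.2 hc)
    obtain ⟨j, hj⟩ := hex
    exact ⟨i, hi, j, hj, (mul_pos (mul_pos hr (hx i)) (hy j)).ne'⟩
  · ext i j
    rw [Matrix.map_apply, Matrix.mul_apply]
    have h1 : ∀ m, (S * diagonal (fun j => if j = k then (1:ℂ) else 0)) i m =
        S i m * (if m = k then (1:ℂ) else 0) := fun m => Matrix.mul_diagonal ..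
    have h2 : (∑ m, (S * diagonal (fun j => if j = k then (1:ℂ) else 0)) i m * S⁻¹ m j)
        = S i k * S⁻¹ k j := by
      rw [Finset.sum_congr rfl fun m _ => by rw [h1 m]]
      rw [Finset.sum_eq_single k (fun m _ hm => by simp [hm]) (by simp)]
      simp
    rw [h2, hcol i, hrow j]
    push_cast
    rw [show α * (x i:ℂ) * (β * (y j:ℂ)) = α * β * (x i:ℂ) * (y j:ℂ) by ring, hαβ]
    simp only [Matrix.of_apply]
    push_cast
    ring

/-- Characterization of Perron similarities: `S` is a Perron similarity iff there is a
unique index `k` such that the `k`-th column of `S` is `α x` and the `k`-th row of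
`S⁻¹` is `β yᵀ` with `αβ > 0` and `x, y` positive vectors. -/
theorem perronSimilarity_iff {n : ℕ} (hn : 2 ≤ n) (S : Matrix (Fin n) (Fin n) ℂ)
    (hS : IsUnit S.det) :
    IsPerronSimilarity S ↔
      ∃! k : Fin n, ∃ (α β : ℂ) (x y : Fin n → ℝ),
        α ≠ 0 ∧ β ≠ 0 ∧ (∃ r : ℝ, 0 < r ∧ α * β = (r : ℂ)) ∧
        (∀ i, 0 < x i) ∧ (∀ i, 0 < y i) ∧
        (∀ i, S i k = α * (x i : ℂ)) ∧ (∀ j, S⁻¹ k j = β * (y j : ℂ)) := by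
  constructor
  · intro h
    obtain ⟨k, hk⟩ := forward_dir hn S hS h
    exact ⟨k, hk, fun k' hk' => unique_dir S hS k' k hk' hk⟩
  · rintro ⟨k, hk, -⟩
    exact backward_dir S hS k hk
end

section
/- For S ∈ GL_n(ℂ), the spectracone is contained in the row cone, 𝒞(S) ⊆ 𝒞_r(S), if and only if the all-ones vector e lies in 𝒞_r(S). -/
open Finset Matrix

/-- The row cone of `S`: the conical hull of the rows of `S`. -/
def rowCone {n : ℕ} (S : Matrix (Fin n) (Fin n) ℂ) : Set (Fin n → ℂ) :=
  {x | ∃ y : Fin n → ℝ, (∀ i, 0 ≤ y i) ∧ x = (fun i => (y i : ℂ)) ᵥ* S}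

/-- `𝒞(S) ⊆ 𝒞_r(S)` iff the all-ones vector lies in `𝒞_r(S)`. -/
theorem spectracone_subset_rowCone_iff {n : ℕ} (S : Matrix (Fin n) (Fin n) ℂ)
    (hS : IsUnit S.det) :
    spectracone S ⊆ rowCone S ↔ (fun _ => (1 : ℂ)) ∈ rowCone S := by
  constructor
  · intro h
    apply h
    show EntrywiseNonneg _
    have : S * diagonal (fun _ => (1 : ℂ)) * S⁻¹ = 1 := by
      rw [diagonal_one, mul_one, mul_nonsing_inv _ hS]
    rw [this]
    intro i j
    by_cases hij : i = j
    · simp [Matrix.one_apply, hij]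
    · simp [Matrix.one_apply, hij]
  · rintro ⟨y, hy, he⟩ x hx
    set M := S * diagonal x * S⁻¹ with hM
    have hx' : ∀ i j, (M i j).im = 0 ∧ 0 ≤ (M i j).re := hx
    have h1 : (fun _ => (1 : ℂ)) ᵥ* diagonal x = x := by
      funext j; simp [Matrix.vecMul_diagonal]
    have key : (fun i => (y i : ℂ)) ᵥ* M = x ᵥ* S⁻¹ := by
      calc (fun i => (y i : ℂ)) ᵥ* M
          = ((fun i => (y i : ℂ)) ᵥ* S) ᵥ* (diagonal x * S⁻¹) := by
            rw [hM, Matrix.mul_assoc, Matrix.vecMul_vecMul]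
        _ = ((fun _ => (1 : ℂ)) ᵥ* diagonal x) ᵥ* S⁻¹ := by
            rw [← he, Matrix.vecMul_vecMul]
        _ = x ᵥ* S⁻¹ := by rw [h1]
    refine ⟨fun j => (((fun i => (y i : ℂ)) ᵥ* M) j).re, ?_, ?_⟩
    · intro j
      show 0 ≤ (((fun i => (y i : ℂ)) ᵥ* M) j).re
      have : ((fun i => (y i : ℂ)) ᵥ* M) j = ∑ i, (y i : ℂ) * M i j := rfl
      rw [this, Complex.re_sum]
      apply Finset.sum_nonneg
      intro i _
      have h1 := (hx' i j).2
      have : ((y i : ℂ) * M i j).re = y i * (M i j).re := by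
        simp [Complex.mul_re, (hx' i j).1]
      rw [this]
      exact mul_nonneg (hy i) h1
    · have hreal : (fun j => ((((fun i => (y i : ℂ)) ᵥ* M) j).re : ℂ))
          = (fun i => (y i : ℂ)) ᵥ* M := by
        funext j
        apply Complex.ext
        · simp
        · simp only [Complex.ofReal_im]
          have : ((fun i => (y i : ℂ)) ᵥ* M) j = ∑ i, (y i : ℂ) * M i j := rfl
          rw [this, Complex.im_sum]
          symm
          apply Finset.sum_eq_zero
          intro i _
          simp [Complex.mul_im, (hx' i j).1]
      rw [hreal, key, Matrix.vecMul_vecMul, nonsing_inv_mul _ hS, Matrix.vecMul_one]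
end

section
/- Let S be the (n+1)-by-(n+1) block matrix S = [[1, e_1^⊤],[0, F_n]] where F_n is the unnormalized DFT matrix. Then S is invertible with S^{−1} = [[1, −e^⊤/n],[0, F_n^{−1}]], and the spectratope satisfies 𝒫(S) = [0,1] × 𝒫(F_n): a vector x = (x_1, y) with y ∈ ℂ^n satisfies S diag(x) S^{−1} stochastic if and only if x_1 ∈ [0,1] and F_n diag(y) F_n^{−1} is stochastic. -/
open Finset Matrix Complex

/-- The unnormalized DFT matrix: `(j,k)`-entry `ω^{jk}` (0-indexed), `ω = e^{-2πi/n}`. -/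
noncomputable def DFT (n : ℕ) : Matrix (Fin n) (Fin n) ℂ :=
  Matrix.of fun j k => Complex.exp (-(2 * Real.pi * Complex.I) / n) ^ ((j : ℕ) * (k : ℕ))

/-- A complex matrix is row stochastic if every entry is nonnegative real and each
row sums to `1`. -/
def IsStochasticC {m : Type*} [Fintype m] (M : Matrix m m ℂ) : Prop :=
  (∀ i j, (M i j).im = 0 ∧ 0 ≤ (M i j).re) ∧ ∀ i, ∑ j, M i j = 1

lemma geom_exp_sum (n : ℕ) (hn : 0 < n) (d : ℤ) :
    ∑ l ∈ Finset.range n, Complex.exp ((d : ℂ) * (2 * Real.pi * Complex.I) / n) ^ l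
    = if (n : ℤ) ∣ d then (n : ℂ) else 0 := by
  have hn' : (n : ℂ) ≠ 0 := Nat.cast_ne_zero.mpr hn.ne'
  set ζ : ℂ := Complex.exp ((d : ℂ) * (2 * Real.pi * Complex.I) / n) with hζ
  by_cases hd : (n : ℤ) ∣ d
  · obtain ⟨m, rfl⟩ := hd
    have h1 : ζ = 1 := by
      rw [hζ, show ((((n : ℤ) * m : ℤ) : ℂ)) * (2 * Real.pi * Complex.I) / n
          = (m : ℂ) * (2 * Real.pi * Complex.I) by push_cast; field_simp]
      exact Complex.exp_int_mul_two_pi_mul_I m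
    simp [h1]
  · rw [if_neg hd]
    have hζn : ζ ^ n = 1 := by
      rw [hζ, ← Complex.exp_nat_mul,
        show (n : ℂ) * ((d : ℂ) * (2 * Real.pi * Complex.I) / n)
          = (d : ℂ) * (2 * Real.pi * Complex.I) by field_simp]
      exact Complex.exp_int_mul_two_pi_mul_I d
    have hζ1 : ζ ≠ 1 := by
      intro h
      rw [hζ, Complex.exp_eq_one_iff] at h
      obtain ⟨m, hm⟩ := h
      apply hd
      refine ⟨m, ?_⟩
      have h2 : (2 * (Real.pi : ℂ) * Complex.I) ≠ 0 := by
        simp [Real.pi_ne_zero, Complex.I_ne_zero]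
      have h3 : (d : ℂ) * (2 * Real.pi * Complex.I) = ((n : ℂ) * m) * (2 * Real.pi * Complex.I) := by
        field_simp at hm
        rw [hm]
      have : (d : ℂ) = ((n : ℂ) * m) := mul_right_cancel₀ h2 h3
      exact_mod_cast this
    rw [geom_sum_eq hζ1, hζn]
    simp

noncomputable def dftInv (n : ℕ) : Matrix (Fin n) (Fin n) ℂ :=
  ((n : ℂ)⁻¹) • (Matrix.of fun j k => (starRingEnd ℂ) (DFT n j k))

lemma dft_term (n : ℕ) (j k l : Fin n) :
    DFT n j l * (starRingEnd ℂ) (DFT n l k)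
      = Complex.exp ((((k : ℤ) - (j : ℤ) : ℤ) : ℂ) * (2 * Real.pi * Complex.I) / n) ^ (l : ℕ) := by
  have hconj : (starRingEnd ℂ) (Complex.exp (-(2 * Real.pi * Complex.I) / n))
      = Complex.exp ((2 * Real.pi * Complex.I) / n) := by
    rw [← Complex.exp_conj]
    congr 1
    simp [map_div₀, Complex.conj_I, map_ofNat]
  show Complex.exp (-(2 * Real.pi * Complex.I) / n) ^ ((j : ℕ) * (l : ℕ))
      * (starRingEnd ℂ) (Complex.exp (-(2 * Real.pi * Complex.I) / n) ^ ((l : ℕ) * (k : ℕ))) = _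
  rw [map_pow, hconj, pow_mul, mul_comm (l : ℕ) (k : ℕ), pow_mul, ← mul_pow]
  congr 1
  rw [← Complex.exp_nat_mul, ← Complex.exp_nat_mul, ← Complex.exp_add]
  congr 1
  push_cast
  ring

lemma dvd_sub_iff_eq (n : ℕ) (j k : Fin n) : (n : ℤ) ∣ ((k : ℤ) - (j : ℤ)) ↔ j = k := by
  constructor
  · intro h
    have h1 : ((k : ℤ) - (j : ℤ)) = 0 := by
      apply Int.eq_zero_of_abs_lt_dvd h
      have hk := k.2; have hj := j.2
      rw [abs_lt]
      omega
    have : (j : ℕ) = (k : ℕ) := by omega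
    exact Fin.ext this
  · rintro rfl; simp

lemma dft_mul_inv (n : ℕ) (hn : 0 < n) : DFT n * dftInv n = 1 := by
  have hn' : (n : ℂ) ≠ 0 := Nat.cast_ne_zero.mpr hn.ne'
  ext j k
  rw [Matrix.mul_apply]
  simp only [dftInv, Matrix.smul_apply, Matrix.of_apply, smul_eq_mul]
  calc ∑ l, DFT n j l * ((n : ℂ)⁻¹ * (starRingEnd ℂ) (DFT n l k))
      = (n : ℂ)⁻¹ * ∑ l : Fin n,
          Complex.exp ((((k : ℤ) - (j : ℤ) : ℤ) : ℂ) * (2 * Real.pi * Complex.I) / n) ^ (l : ℕ) := by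
        rw [Finset.mul_sum]
        refine Finset.sum_congr rfl fun l _ => ?_
        rw [← dft_term n j k l]; ring
    _ = (n : ℂ)⁻¹ * (if ((n : ℤ) ∣ ((k : ℤ) - (j : ℤ))) then (n : ℂ) else 0) := by
        rw [Fin.sum_univ_eq_sum_range
          (fun l => Complex.exp ((((k : ℤ) - (j : ℤ) : ℤ) : ℂ) * (2 * Real.pi * Complex.I) / n) ^ l) n,
          geom_exp_sum n hn]
    _ = (1 : Matrix (Fin n) (Fin n) ℂ) j k := by
        simp only [dvd_sub_iff_eq]
        by_cases h : j = k
        · subst h; simp [Matrix.one_apply, hn']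
        · simp [Matrix.one_apply, h]

lemma DFT_row0 (n : ℕ) (hn : 0 < n) (k : Fin n) : DFT n ⟨0, hn⟩ k = 1 := by
  simp [DFT]

lemma DFT_col0 (n : ℕ) (hn : 0 < n) (j : Fin n) : DFT n j ⟨0, hn⟩ = 1 := by
  simp [DFT]

lemma dftInv_row0 (n : ℕ) (hn : 0 < n) (k : Fin n) : dftInv n ⟨0, hn⟩ k = (n : ℂ)⁻¹ := by
  simp [dftInv, DFT]

lemma DFT_symm (n : ℕ) (p q : Fin n) : DFT n p q = DFT n q p := by
  simp [DFT, Nat.mul_comm]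

lemma dftInv_rowsum (n : ℕ) (hn : 0 < n) (l : Fin n) :
    ∑ k, dftInv n l k = if l = ⟨0, hn⟩ then 1 else 0 := by
  have hn' : (n : ℂ) ≠ 0 := Nat.cast_ne_zero.mpr hn.ne'
  have hterm : ∀ k : Fin n, dftInv n l k
      = (n : ℂ)⁻¹ * Complex.exp ((((l : ℤ) - ((⟨0, hn⟩ : Fin n) : ℤ) : ℤ) : ℂ)
          * (2 * Real.pi * Complex.I) / n) ^ (k : ℕ) := by
    intro k
    have h := dft_term n ⟨0, hn⟩ l k
    rw [DFT_row0 n hn k, one_mul, DFT_symm n k l] at h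
    simp only [dftInv, Matrix.smul_apply, Matrix.of_apply, smul_eq_mul, h]
  calc ∑ k, dftInv n l k
      = (n : ℂ)⁻¹ * ∑ k : Fin n, Complex.exp ((((l : ℤ) - ((⟨0, hn⟩ : Fin n) : ℤ) : ℤ) : ℂ)
          * (2 * Real.pi * Complex.I) / n) ^ (k : ℕ) := by
        rw [Finset.mul_sum]; exact Finset.sum_congr rfl fun k _ => hterm k
    _ = (n : ℂ)⁻¹ * (if ((n : ℤ) ∣ ((l : ℤ) - ((⟨0, hn⟩ : Fin n) : ℤ))) then (n : ℂ) else 0) := by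
        rw [Fin.sum_univ_eq_sum_range (fun k => Complex.exp ((((l : ℤ) - ((⟨0, hn⟩ : Fin n) : ℤ) : ℤ) : ℂ)
          * (2 * Real.pi * Complex.I) / n) ^ k) n, geom_exp_sum n hn]
    _ = if l = ⟨0, hn⟩ then 1 else 0 := by
        simp only [dvd_sub_iff_eq n ⟨0, hn⟩ l]
        by_cases h : l = ⟨0, hn⟩
        · simp [h, hn']
        · rw [if_neg (fun hh => h hh.symm), if_neg h, mul_zero]

lemma rowsum_M2 (n : ℕ) (hn : 0 < n) (y : Fin n → ℂ) (j : Fin n) :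
    ∑ k, (DFT n * diagonal y * dftInv n) j k = y ⟨0, hn⟩ := by
  calc ∑ k, (DFT n * diagonal y * dftInv n) j k
      = ∑ k, ∑ l, (DFT n * diagonal y) j l * dftInv n l k := by
        exact Finset.sum_congr rfl fun k _ => Matrix.mul_apply
    _ = ∑ l, (DFT n * diagonal y) j l * ∑ k, dftInv n l k := by
        rw [Finset.sum_comm]
        exact Finset.sum_congr rfl fun l _ => (Finset.mul_sum _ _ _).symm
    _ = ∑ l, (DFT n * diagonal y) j l * (if l = ⟨0, hn⟩ then 1 else 0) := by
        exact Finset.sum_congr rfl fun l _ => by rw [dftInv_rowsum n hn l]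
    _ = (DFT n * diagonal y) j ⟨0, hn⟩ := by
        simp [mul_ite, Finset.sum_ite_eq']
    _ = y ⟨0, hn⟩ := by
        rw [Matrix.mul_diagonal, DFT_col0 n hn j, one_mul]

/-- For `S = [[1, e₁ᵀ],[0, F_n]]`: `S` is invertible with
`S⁻¹ = [[1, -eᵀ/n],[0, F_n⁻¹]]`, and `S diag(x) S⁻¹` is stochastic iff the first
entry of `x` lies in `[0,1]` and `F_n diag(y) F_n⁻¹` is stochastic, where `y` is the
rest of `x`. -/
theorem spectratope_block_dft {n : ℕ} (hn : 0 < n) :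
    let S : Matrix (Fin 1 ⊕ Fin n) (Fin 1 ⊕ Fin n) ℂ :=
      fromBlocks 1 (Matrix.of fun _ k => if k = (⟨0, hn⟩ : Fin n) then 1 else 0)
        0 (DFT n)
    IsUnit S.det ∧
    S⁻¹ = fromBlocks 1 (Matrix.of fun _ _ => -(1 : ℂ) / n) 0 (DFT n)⁻¹ ∧
    ∀ x : Fin 1 ⊕ Fin n → ℂ,
      IsStochasticC (S * diagonal x * S⁻¹) ↔
        ((∃ r : ℝ, 0 ≤ r ∧ r ≤ 1 ∧ x (Sum.inl 0) = (r : ℂ)) ∧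
          IsStochasticC ((DFT n) * diagonal (fun k => x (Sum.inr k)) * (DFT n)⁻¹)) := by
  intro S
  have hn' : (n : ℂ) ≠ 0 := Nat.cast_ne_zero.mpr hn.ne'
  have hnR : (0 : ℝ) < n := by exact_mod_cast hn
  have hFinv : (DFT n)⁻¹ = dftInv n := Matrix.inv_eq_right_inv (dft_mul_inv n hn)
  set B : Matrix (Fin 1) (Fin n) ℂ :=
    Matrix.of fun _ k => if k = (⟨0, hn⟩ : Fin n) then 1 else 0 with hB
  set C : Matrix (Fin 1) (Fin n) ℂ := Matrix.of fun _ _ => -(1 : ℂ) / n with hC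
  set T : Matrix (Fin 1 ⊕ Fin n) (Fin 1 ⊕ Fin n) ℂ :=
    fromBlocks 1 C 0 (DFT n)⁻¹ with hT
  have hST : S * T = 1 := by
    show fromBlocks 1 B 0 (DFT n) * fromBlocks 1 C 0 (DFT n)⁻¹ = 1
    rw [Matrix.fromBlocks_multiply, hFinv]
    have h12 : (1 : Matrix (Fin 1) (Fin 1) ℂ) * C + B * dftInv n = 0 := by
      ext i k
      rw [Matrix.one_mul, Matrix.add_apply, Matrix.mul_apply,
        Finset.sum_eq_single (⟨0, hn⟩ : Fin n)]
      · simp [hB, hC, dftInv_row0 n hn k, neg_div]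
      · intro l _ hl; simp [hB, hl]
      · intro h; exact absurd (Finset.mem_univ _) h
    rw [h12]
    simp [dft_mul_inv n hn, Matrix.fromBlocks_one]
  have hdet : IsUnit S.det := Matrix.isUnit_det_of_right_inverse hST
  have hSinv : S⁻¹ = T := Matrix.inv_eq_right_inv hST
  refine ⟨hdet, hSinv, ?_⟩
  intro x
  set a : ℂ := x (Sum.inl 0) with ha
  set y : Fin n → ℂ := fun k => x (Sum.inr k) with hy
  set M₂ : Matrix (Fin n) (Fin n) ℂ := DFT n * diagonal y * (DFT n)⁻¹ with hM₂
  have hx : diagonal x = fromBlocks (diagonal fun i : Fin 1 => x (Sum.inl i)) 0 0 (diagonal y) := by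
    rw [Matrix.fromBlocks_diagonal]
    funext i
    cases i <;> rfl
  have key : S * diagonal x * S⁻¹ =
      fromBlocks (Matrix.of fun _ _ => a) (Matrix.of fun _ _ => (y ⟨0, hn⟩ - a) / n) 0 M₂ := by
    rw [hSinv, hx]
    show fromBlocks 1 B 0 (DFT n) * _ * fromBlocks 1 C 0 (DFT n)⁻¹ = _
    rw [Matrix.fromBlocks_multiply, Matrix.fromBlocks_multiply]
    simp only [Matrix.mul_zero, Matrix.zero_mul, Matrix.mul_one, Matrix.one_mul,
      add_zero, zero_add]
    have eA : (Matrix.diagonal fun i : Fin 1 => x (Sum.inl i))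
        = (Matrix.of fun _ _ => a : Matrix (Fin 1) (Fin 1) ℂ) := by
      ext i j
      fin_cases i; fin_cases j
      simp [ha]
    have eB : (Matrix.diagonal fun i : Fin 1 => x (Sum.inl i)) * C
          + B * Matrix.diagonal y * (DFT n)⁻¹
        = (Matrix.of fun _ _ => (y ⟨0, hn⟩ - a) / n : Matrix (Fin 1) (Fin n) ℂ) := by
      rw [hFinv]
      ext i k
      have hBD : (B * diagonal y * dftInv n) i k = y ⟨0, hn⟩ * (n : ℂ)⁻¹ := by
        rw [Matrix.mul_apply, Finset.sum_eq_single (⟨0, hn⟩ : Fin n)]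
        · rw [Matrix.mul_diagonal, dftInv_row0 n hn k]; simp [hB]
        · intro l _ hl; rw [Matrix.mul_diagonal]; simp [hB, hl]
        · intro h; exact absurd (Finset.mem_univ _) h
      rw [Matrix.add_apply, hBD, Matrix.mul_apply, Fin.sum_univ_one]
      have hdc : diagonal (fun i : Fin 1 => x (Sum.inl i)) i 0 * C 0 k = a * (-(1) / n) := by
        fin_cases i; simp [hC, ha]
      rw [hdc]
      show a * (-1 / n) + y ⟨0, hn⟩ * (n : ℂ)⁻¹ = (y ⟨0, hn⟩ - a) / n
      field_simp
      ring
    rw [eB, eA, ← hM₂]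
  rw [key]
  have hrow0 : ∀ i : Fin 1, ∑ j, fromBlocks (Matrix.of fun _ _ => a : Matrix (Fin 1) (Fin 1) ℂ)
      (Matrix.of fun _ _ => (y ⟨0, hn⟩ - a) / n) 0 M₂ (Sum.inl i) j = y ⟨0, hn⟩ := by
    intro i
    rw [Fintype.sum_sum_type]
    simp only [Matrix.fromBlocks_apply₁₁, Matrix.fromBlocks_apply₁₂, Matrix.of_apply]
    rw [Fin.sum_univ_one, Finset.sum_const, Finset.card_univ, Fintype.card_fin, nsmul_eq_mul]
    field_simp
    ring
  have hrowj : ∀ j : Fin n, ∑ k, fromBlocks (Matrix.of fun _ _ => a : Matrix (Fin 1) (Fin 1) ℂ)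
      (Matrix.of fun _ _ => (y ⟨0, hn⟩ - a) / n) 0 M₂ (Sum.inr j) k = ∑ k, M₂ j k := by
    intro j
    rw [Fintype.sum_sum_type]
    simp
  have hM2row : ∀ j : Fin n, ∑ k, M₂ j k = y ⟨0, hn⟩ := by
    intro j
    rw [hM₂, hFinv]
    exact rowsum_M2 n hn y j
  constructor
  · rintro ⟨hpos, hsum⟩
    have hy0 : y ⟨0, hn⟩ = 1 := by rw [← hrow0 0]; exact hsum (Sum.inl 0)
    have haim : a.im = 0 := (hpos (Sum.inl 0) (Sum.inl 0)).1
    have hare : 0 ≤ a.re := (hpos (Sum.inl 0) (Sum.inl 0)).2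
    have haeq : a = (a.re : ℂ) := by
      apply Complex.ext <;> simp [haim]
    refine ⟨⟨a.re, hare, ?_, haeq⟩, ?_, ?_⟩
    · have h := (hpos (Sum.inl 0) (Sum.inr ⟨0, hn⟩)).2
      simp only [Matrix.fromBlocks_apply₁₂, Matrix.of_apply] at h
      rw [hy0, haeq] at h
      have hcast : ((1 : ℂ) - (a.re : ℂ)) / n = (((1 - a.re) / n : ℝ) : ℂ) := by
        push_cast; ring
      rw [hcast, Complex.ofReal_re] at h
      rcases div_nonneg_iff.mp h with ⟨h1, -⟩ | ⟨-, h2⟩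
      · linarith
      · linarith
    · intro j k
      exact hpos (Sum.inr j) (Sum.inr k)
    · intro j
      rw [← hrowj j]
      exact hsum (Sum.inr j)
  · rintro ⟨⟨r, hr0, hr1, har⟩, hM2pos, hM2sum⟩
    have hy0 : y ⟨0, hn⟩ = 1 := by rw [← hM2row ⟨0, hn⟩]; exact hM2sum ⟨0, hn⟩
    have haR : a = (r : ℂ) := har
    constructor
    · rintro (i | j) (i' | k)
      · simp only [Matrix.fromBlocks_apply₁₁, Matrix.of_apply, haR]
        simp [hr0]
      · simp only [Matrix.fromBlocks_apply₁₂, Matrix.of_apply, hy0, haR]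
        have hcast : ((1 : ℂ) - (r : ℂ)) / n = (((1 - r) / n : ℝ) : ℂ) := by
          push_cast; ring
        rw [hcast]
        simp only [Complex.ofReal_im, Complex.ofReal_re]
        exact ⟨trivial, div_nonneg (by linarith) hnR.le⟩
      · simp
      · exact hM2pos j k
    · rintro (i | j)
      · rw [hrow0 i, hy0]
      · rw [hrowj j]
        exact hM2sum j
end
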